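/- arXiv:1510.05015 — 5 statements merged into one kernel-verified Lean document; each statement's English description precedes it below -/
import Mathlib

section
/- For every λ ∈ ℝ, the set F²_λ := {tr(y) : y : [a,b] → ℝ^{2n} is twice differentiable and -y''(x) + (V⊗I₂)(x)y(x) = λy(x) for all x ∈ [a,b]} is a Lagrangian subspace of (ℝ^{8n}, ω): it is a linear subspace with dim_ℝ F²_λ = 4n, and ω(Y₁,Y₂) = 0 for all Y₁, Y₂ ∈ F²_λ. -/
open Set Matrix

noncomputable section

/-- `ℝ^{2n}`, indexed by `Fin n × Fin 2`. -/
abbrev R2n (n : ℕ) := Fin n × Fin 2 → ℝ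

/-- `ℝ^{8n}`, written as a quadruple of vectors in `ℝ^{2n}`; the first two components
form the first `ℝ^{4n}`-half, the last two the second half. -/
abbrev R8n (n : ℕ) := R2n n × R2n n × R2n n × R2n n

/-- The symplectic form `ω((x₁,x₂),(y₁,y₂)) = ⟨x₁,y₂⟩ - ⟨x₂,y₁⟩` on `ℝ^{8n} = ℝ^{4n} × ℝ^{4n}`. -/
def omegaForm (n : ℕ) (X Y : R8n n) : ℝ :=
  (X.1 ⬝ᵥ Y.2.2.1 + X.2.1 ⬝ᵥ Y.2.2.2) - (X.2.2.1 ⬝ᵥ Y.1 + X.2.2.2 ⬝ᵥ Y.2.1)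

/-- The `2n × 2n` matrix `V(x) ⊗ I₂`. -/
def VI2 (n : ℕ) (V : ℝ → Matrix (Fin n) (Fin n) ℝ) (x : ℝ) :
    Matrix (Fin n × Fin 2) (Fin n × Fin 2) ℝ :=
  Matrix.kroneckerMap (· * ·) (V x) (1 : Matrix (Fin 2) (Fin 2) ℝ)

/-- `y` (with first and second derivatives `y'`, `y''` on `[a,b]`) is a twice differentiable
solution of `-y'' + (V⊗I₂)y = λ y` on `[a,b]`. -/
def IsSolR (n : ℕ) (a b : ℝ) (V : ℝ → Matrix (Fin n) (Fin n) ℝ) (lam : ℝ)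
    (y y' y'' : ℝ → R2n n) : Prop :=
  (∀ x ∈ Icc a b, HasDerivWithinAt y (y' x) (Icc a b) x) ∧
  (∀ x ∈ Icc a b, HasDerivWithinAt y' (y'' x) (Icc a b) x) ∧
  (∀ x ∈ Icc a b, -y'' x + (VI2 n V x).mulVec (y x) = lam • y x)

/-- The set `F²_λ` of traces `(y(a), y(b), -y'(a), y'(b))` of solutions of
`-y'' + (V⊗I₂)y = λ y` on `[a,b]`. -/
def F2 (n : ℕ) (a b : ℝ) (V : ℝ → Matrix (Fin n) (Fin n) ℝ) (lam : ℝ) : Set (R8n n) :=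
  {X | ∃ y y' y'' : ℝ → R2n n, IsSolR n a b V lam y y' y'' ∧
        X = (y a, y b, -(y' a), y' b)}

/-!
Writing `z = (y, y')`, the equation `-y'' + (V ⊗ I₂) y = λ y` becomes the linear first-order
system `z' = A(t) z` with `A(t) (u, v) = (v, (V(t) ⊗ I₂) u - λ u)`. Its solutions on `[a, b]` exist
and are unique for every initial value `z(a) ∈ ℝ^{4n}`, and `z(a) ↦ z(b)` is linear, so `F²_λ`
is the image of `ℝ^{4n}` under the injective linear map `z(a) ↦ (y(a), y(b), -y'(a), y'(b))`.
Since `V ⊗ I₂` is symmetric, every `A(t)` is skew for the form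
`Ω((u, v), (u', v')) = ⟨u, v'⟩ - ⟨v, u'⟩`, so the Wronskian `Ω(z₁(t), z₂(t))` of two solutions
is constant, while `ω` evaluated on their traces is `Ω(z₁(b), z₂(b)) - Ω(z₁(a), z₂(a))`.
-/

open scoped NNReal

theorem HasDerivWithinAt.Ici_of_Icc {F : Type*} [NormedAddCommGroup F] [NormedSpace ℝ F]
    {f : ℝ → F} {f' : F} {a b t : ℝ} (h : HasDerivWithinAt f f' (Icc a b) t) (ht : t ∈ Ico a b) :
    HasDerivWithinAt f f' (Ici t) t :=
  h.mono_of_mem_nhdsWithin (Icc_mem_nhdsGE_of_mem ht)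

section LinearODE

variable {E : Type*} [NormedAddCommGroup E] [NormedSpace ℝ E]

theorem IsIntegralCurveOn.exists_Icc_union {v : ℝ → E → E} {z₁ z₂ : ℝ → E} {a c d : ℝ}
    (h₁ : IsIntegralCurveOn z₁ v (Icc a c)) (h₂ : IsIntegralCurveOn z₂ v (Icc c d))
    (hc : z₁ c = z₂ c) (hac : a ≤ c) (hcd : c ≤ d) :
    ∃ z, z a = z₁ a ∧ IsIntegralCurveOn z v (Icc a d) := by
  set z : ℝ → E := fun t => if t ≤ c then z₁ t else z₂ t
  have hz₁ : EqOn z z₁ (Icc a c) := fun t ht => if_pos ht.2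
  have hz₂ : EqOn z z₂ (Icc c d) := fun t ht => by
    rcases ht.1.eq_or_lt with rfl | hct
    · exact (if_pos le_rfl).trans hc
    · exact if_neg hct.not_ge
  have piece : ∀ {p q : ℝ} {w : ℝ → E}, IsIntegralCurveOn w v (Icc p q) → EqOn z w (Icc p q) →
      ∀ t, HasDerivWithinAt z (v t (z t)) (Icc p q) t := by
    intro p q w hw hzw t
    by_cases ht : t ∈ Icc p q
    · rw [hzw ht]
      exact (hw t ht).congr hzw (hzw ht)
    · exact hasDerivWithinAt_iff_hasFDerivWithinAt.2
        (.of_notMem_closure (by rwa [isClosed_Icc.closure_eq]))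
  refine ⟨z, hz₁ (left_mem_Icc.2 hac), fun t _ => ?_⟩
  rw [← Icc_union_Icc_eq_Icc hac hcd]
  exact (piece h₁ hz₁ t).union (piece h₂ hz₂ t)

variable {A : ℝ → E →L[ℝ] E} {a b : ℝ}

theorem ContinuousOn.exists_pos_nnnorm_le_Icc (hA : ContinuousOn A (Icc a b)) :
    ∃ K : ℝ≥0, 0 < K ∧ ∀ t ∈ Icc a b, ‖A t‖₊ ≤ K := by
  obtain ⟨C, hC⟩ := isCompact_Icc.exists_bound_of_continuousOn hA
  refine ⟨C.toNNReal + 1, by positivity, fun t ht => ?_⟩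
  rw [← NNReal.coe_le_coe, coe_nnnorm, NNReal.coe_add, NNReal.coe_one]
  linarith [hC t ht, Real.le_coe_toNNReal C]

theorem exists_isIntegralCurveOn_clm_of_mul_le [CompleteSpace E] {K : ℝ≥0}
    (hA : ContinuousOn A (Icc a b)) (hK : ∀ t ∈ Icc a b, ‖A t‖₊ ≤ K) (hab : a ≤ b)
    (hlen : K * (b - a) ≤ 1 / 2) (x₀ : E) :
    ∃ z, z a = x₀ ∧ IsIntegralCurveOn z (fun t => A t) (Icc a b) := by
  -- on the ball of radius `‖x₀‖` about `x₀` the field is bounded by `2 K ‖x₀‖`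
  have hPL : IsPicardLindelof (fun t => A t) (tmin := a) (tmax := b) ⟨a, left_mem_Icc.2 hab⟩ x₀
      ‖x₀‖₊ 0 (2 * K * ‖x₀‖₊) K := by
    refine ⟨fun t ht => ((A t).lipschitz.weaken (hK t ht)).lipschitzOnWith,
      fun x _ => hA.clm_apply continuousOn_const, fun t ht x hx => ?_, ?_⟩
    · have hx' : ‖x‖ ≤ 2 * ‖x₀‖ := by
        have := norm_le_of_mem_closedBall hx
        rw [coe_nnnorm] at this
        linarith
      calc ‖A t x‖ ≤ ‖A t‖ * ‖x‖ := (A t).le_opNorm x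
        _ ≤ K * (2 * ‖x₀‖) := mul_le_mul (hK t ht) hx' (norm_nonneg x) K.2
        _ = (2 * K * ‖x₀‖₊ : ℝ≥0) := by push_cast; ring
    · simp only [NNReal.coe_mul, NNReal.coe_ofNat, coe_nnnorm, sub_self, NNReal.coe_zero,
        sub_zero]
      rw [max_eq_left (by linarith)]
      nlinarith [norm_nonneg x₀]
  exact hPL.exists_eq_forall_mem_Icc_hasDerivWithinAt₀

theorem exists_isIntegralCurveOn_clm [CompleteSpace E] (hA : ContinuousOn A (Icc a b))
    (hab : a ≤ b) (x₀ : E) :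
    ∃ z, z a = x₀ ∧ IsIntegralCurveOn z (fun t => A t) (Icc a b) := by
  obtain ⟨K, hK0, hK⟩ := hA.exists_pos_nnnorm_le_Icc
  set h : ℝ := 1 / (2 * K)
  have hh : 0 < h := by positivity
  have hKh : (K : ℝ) * h = 1 / 2 := by simp only [h]; field_simp
  -- march across `[a, b]` in steps of length `h`, on each of which Picard–Lindelöf applies
  have step : ∀ k : ℕ, ∀ d ∈ Icc a b, d ≤ a + k * h → ∀ x₀ : E,
      ∃ z, z a = x₀ ∧ IsIntegralCurveOn z (fun t => A t) (Icc a d) := by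
    intro k
    induction k with
    | zero =>
      intro d hd hdk x₀
      have hda : d = a := le_antisymm (by simpa using hdk) hd.1
      subst hda
      exact exists_isIntegralCurveOn_clm_of_mul_le (hA.mono (Icc_subset_Icc_right hd.2))
        (fun t ht => hK t (Icc_subset_Icc_right hd.2 ht)) le_rfl (by simp) x₀
    | succ k ih =>
      intro d hd hdk x₀
      set c := max a (d - h)
      have hac : a ≤ c := le_max_left _ _
      have hcd : c ≤ d := max_le hd.1 (by linarith)
      have hsub : Icc c d ⊆ Icc a b := Icc_subset_Icc hac hd.2
      obtain ⟨z₁, hz₁a, hz₁⟩ := ih c ⟨hac, hcd.trans hd.2⟩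
        (max_le (by nlinarith [k.cast_nonneg (α := ℝ)]) (by push_cast at hdk; linarith)) x₀
      obtain ⟨z₂, hz₂c, hz₂⟩ := exists_isIntegralCurveOn_clm_of_mul_le (hA.mono hsub)
        (fun t ht => hK t (hsub ht)) hcd
        (by nlinarith [le_max_right a (d - h), K.2]) (z₁ c)
      obtain ⟨z, hza, hz⟩ := hz₁.exists_Icc_union hz₂ hz₂c.symm hac hcd
      exact ⟨z, hza.trans hz₁a, hz⟩
  refine step ⌈(b - a) / h⌉₊ b (right_mem_Icc.2 hab) ?_ x₀
  have := (div_le_iff₀ hh).1 (Nat.le_ceil ((b - a) / h))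
  linarith

theorem IsIntegralCurveOn.eqOn_of_clm {z w : ℝ → E} (hA : ContinuousOn A (Icc a b))
    (hz : IsIntegralCurveOn z (fun t => A t) (Icc a b))
    (hw : IsIntegralCurveOn w (fun t => A t) (Icc a b)) (ha : z a = w a) :
    EqOn z w (Icc a b) := by
  obtain ⟨K, -, hK⟩ := hA.exists_pos_nnnorm_le_Icc
  exact ODE_solution_unique_of_mem_Icc_right (s := fun _ => univ)
    (fun t ht => ((A t).lipschitz.weaken (hK t (Ico_subset_Icc_self ht))).lipschitzOnWith)
    hz.continuousOn (fun t ht => (hz t (Ico_subset_Icc_self ht)).Ici_of_Icc ht)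
    (fun _ _ => trivial)
    hw.continuousOn (fun t ht => (hw t (Ico_subset_Icc_self ht)).Ici_of_Icc ht)
    (fun _ _ => trivial) ha

theorem IsIntegralCurveOn.add_of_clm {s : Set ℝ} {z w : ℝ → E}
    (hz : IsIntegralCurveOn z (fun t => A t) s) (hw : IsIntegralCurveOn w (fun t => A t) s) :
    IsIntegralCurveOn (z + w) (fun t => A t) s := fun t ht => by
  simpa only [Pi.add_apply, map_add] using (hz t ht).add (hw t ht)

theorem IsIntegralCurveOn.const_smul_of_clm {s : Set ℝ} {z : ℝ → E}
    (hz : IsIntegralCurveOn z (fun t => A t) s) (c : ℝ) :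
    IsIntegralCurveOn (c • z) (fun t => A t) s := fun t ht => by
  simpa only [Pi.smul_apply, map_smul] using (hz t ht).const_smul c

theorem IsIntegralCurveOn.bilinear_eq_of_skew {z w : ℝ → E} (B : E →L[ℝ] E →L[ℝ] ℝ)
    (hskew : ∀ t ∈ Icc a b, ∀ x y, B (A t x) y + B x (A t y) = 0)
    (hz : IsIntegralCurveOn z (fun t => A t) (Icc a b))
    (hw : IsIntegralCurveOn w (fun t => A t) (Icc a b)) (hab : a ≤ b) :
    B (z b) (w b) = B (z a) (w a) := by
  have hderiv : ∀ t ∈ Icc a b, HasDerivWithinAt (fun t => B (z t) (w t)) 0 (Icc a b) t := by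
    intro t ht
    exact (B.hasDerivWithinAt_of_bilinear (hz t ht) (hw t ht)).congr_deriv
      (by rw [add_comm, hskew t ht])
  exact constant_of_has_deriv_right_zero (fun t ht => (hderiv t ht).continuousWithinAt)
    (fun t ht => (hderiv t (Ico_subset_Icc_self ht)).Ici_of_Icc ht) b ⟨hab, le_rfl⟩

def IsStateTransition (A : ℝ → E →L[ℝ] E) (a b : ℝ) (P : E →ₗ[ℝ] E) : Prop :=
  ∀ z, IsIntegralCurveOn z (fun t => A t) (Icc a b) → P (z a) = z b

theorem exists_isStateTransition [CompleteSpace E] (hA : ContinuousOn A (Icc a b))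
    (hab : a ≤ b) : ∃ P, IsStateTransition A a b P := by
  choose sol hsol₀ hsol using exists_isIntegralCurveOn_clm hA hab
  have hP : ∀ z, IsIntegralCurveOn z (fun t => A t) (Icc a b) → sol (z a) b = z b :=
    fun z hz => (hsol (z a)).eqOn_of_clm hA hz (hsol₀ (z a)) ⟨hab, le_rfl⟩
  refine ⟨{ toFun x := sol x b, map_add' x y := ?_, map_smul' c x := ?_ }, hP⟩
  · simpa [hsol₀] using hP _ ((hsol x).add_of_clm (hsol y))
  · simpa [hsol₀] using hP _ ((hsol x).const_smul_of_clm c)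

theorem IsStateTransition.bilinear_apply_eq_of_skew [CompleteSpace E] {P : E →ₗ[ℝ] E}
    (hP : IsStateTransition A a b P) (hA : ContinuousOn A (Icc a b)) (hab : a ≤ b)
    (B : E →L[ℝ] E →L[ℝ] ℝ) (hskew : ∀ t ∈ Icc a b, ∀ x y, B (A t x) y + B x (A t y) = 0)
    (x y : E) : B (P x) (P y) = B x y := by
  obtain ⟨z, rfl, hz⟩ := exists_isIntegralCurveOn_clm hA hab x
  obtain ⟨w, rfl, hw⟩ := exists_isIntegralCurveOn_clm hA hab y
  rw [hP z hz, hP w hw]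
  exact hz.bilinear_eq_of_skew B hskew hw hab

end LinearODE

section Companion

variable {ι : Type*} [Fintype ι]

def companionCLM (M : Matrix ι ι ℝ) (lam : ℝ) : (ι → ℝ) × (ι → ℝ) →L[ℝ] (ι → ℝ) × (ι → ℝ) :=
  LinearMap.toContinuousLinearMap
    ((LinearMap.snd ℝ _ _).prod ((M.mulVecLin - lam • LinearMap.id) ∘ₗ LinearMap.fst ℝ _ _))

@[simp]
theorem companionCLM_apply (M : Matrix ι ι ℝ) (lam : ℝ) (x : (ι → ℝ) × (ι → ℝ)) :
    companionCLM M lam x = (x.2, M *ᵥ x.1 - lam • x.1) := rfl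

variable (ι) in
def symplecticBilin : (ι → ℝ) × (ι → ℝ) →L[ℝ] (ι → ℝ) × (ι → ℝ) →L[ℝ] ℝ :=
  LinearMap.toContinuousBilinearMap
    ((dotProductBilin ℝ ℝ).compl₁₂ (LinearMap.fst ℝ (ι → ℝ) (ι → ℝ)) (LinearMap.snd ℝ _ _) -
      (dotProductBilin ℝ ℝ).compl₁₂ (LinearMap.snd ℝ (ι → ℝ) (ι → ℝ)) (LinearMap.fst ℝ _ _))

@[simp]
theorem symplecticBilin_apply (x y : (ι → ℝ) × (ι → ℝ)) :
    symplecticBilin ι x y = x.1 ⬝ᵥ y.2 - x.2 ⬝ᵥ y.1 := rfl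

theorem symplecticBilin_companionCLM_add {M : Matrix ι ι ℝ} (hM : Mᵀ = M) (lam : ℝ)
    (x y : (ι → ℝ) × (ι → ℝ)) :
    symplecticBilin ι (companionCLM M lam x) y + symplecticBilin ι x (companionCLM M lam y) =
      0 := by
  have hMxy : M *ᵥ x.1 ⬝ᵥ y.1 = x.1 ⬝ᵥ M *ᵥ y.1 := by
    rw [dotProduct_mulVec, ← mulVec_transpose, hM, dotProduct_comm]
  simp only [symplecticBilin_apply, companionCLM_apply, sub_dotProduct, dotProduct_sub,
    smul_dotProduct, dotProduct_smul, hMxy]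
  ring

theorem ContinuousOn.companionCLM {M : ℝ → Matrix ι ι ℝ} {s : Set ℝ} (hM : ContinuousOn M s)
    (lam : ℝ) : ContinuousOn (fun t => companionCLM (M t) lam) s := by
  refine continuousOn_clm_apply.2 fun x =>
    continuousOn_const.prodMk (ContinuousOn.sub ?_ continuousOn_const)
  exact continuousOn_iff_continuous_domRestrict.2
    ((continuousOn_iff_continuous_domRestrict.1 hM).matrix_mulVec continuous_const)

end Companion

section Schrodinger

variable {n : ℕ} {a b lam : ℝ} {V : ℝ → Matrix (Fin n) (Fin n) ℝ}

theorem continuousOn_VI2 {s : Set ℝ} (hV : ∀ i j, ContinuousOn (fun x => V x i j) s) :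
    ContinuousOn (VI2 n V) s :=
  continuousOn_pi.2 fun p => continuousOn_pi.2 fun q => (hV p.1 q.1).mul continuousOn_const

theorem VI2_transpose {x : ℝ} (h : (V x)ᵀ = V x) : (VI2 n V x)ᵀ = VI2 n V x := by
  rw [VI2, ← kroneckerMap_transpose, h, transpose_one]

theorem IsSolR.isIntegralCurveOn {y y' y'' : ℝ → R2n n} (h : IsSolR n a b V lam y y' y'') :
    IsIntegralCurveOn (fun t => (y t, y' t)) (fun t => companionCLM (VI2 n V t) lam)
      (Icc a b) := by
  intro t ht
  refine ((h.1 t ht).prodMk (h.2.1 t ht)).congr_deriv (Prod.ext rfl ?_)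
  change y'' t = VI2 n V t *ᵥ y t - lam • y t
  rw [← h.2.2 t ht]
  abel

theorem IsIntegralCurveOn.isSolR {z : ℝ → R2n n × R2n n}
    (hz : IsIntegralCurveOn z (fun t => companionCLM (VI2 n V t) lam) (Icc a b)) :
    IsSolR n a b V lam (fun t => (z t).1) (fun t => (z t).2)
      (fun t => VI2 n V t *ᵥ (z t).1 - lam • (z t).1) :=
  ⟨fun t ht =>
    (ContinuousLinearMap.fst ℝ (R2n n) (R2n n)).hasFDerivAt.comp_hasDerivWithinAt t (hz t ht),
    fun t ht =>
    (ContinuousLinearMap.snd ℝ (R2n n) (R2n n)).hasFDerivAt.comp_hasDerivWithinAt t (hz t ht),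
    fun t _ => by simp only [neg_sub, sub_add_cancel]⟩

def boundaryTraceMap (P : R2n n × R2n n →ₗ[ℝ] R2n n × R2n n) : R2n n × R2n n →ₗ[ℝ] R8n n :=
  (LinearMap.fst ℝ _ _).prod ((LinearMap.fst ℝ _ _ ∘ₗ P).prod
    ((-LinearMap.snd ℝ _ _).prod (LinearMap.snd ℝ _ _ ∘ₗ P)))

@[simp]
theorem boundaryTraceMap_apply (P : R2n n × R2n n →ₗ[ℝ] R2n n × R2n n) (x : R2n n × R2n n) :
    boundaryTraceMap P x = (x.1, (P x).1, -x.2, (P x).2) := rfl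

theorem boundaryTraceMap_injective (P : R2n n × R2n n →ₗ[ℝ] R2n n × R2n n) :
    Function.Injective (boundaryTraceMap P) := by
  intro x y h
  simp only [boundaryTraceMap_apply, Prod.mk.injEq, neg_inj] at h
  exact Prod.ext h.1 h.2.2.1

theorem omegaForm_boundaryTraceMap (P : R2n n × R2n n →ₗ[ℝ] R2n n × R2n n)
    (x y : R2n n × R2n n) :
    omegaForm n (boundaryTraceMap P x) (boundaryTraceMap P y) =
      symplecticBilin _ (P x) (P y) - symplecticBilin _ x y := by
  simp only [omegaForm, boundaryTraceMap_apply, symplecticBilin_apply, dotProduct_neg,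
    neg_dotProduct]
  ring

theorem F2_eq_range_boundaryTraceMap (hab : a ≤ b)
    (hA : ContinuousOn (fun t => companionCLM (VI2 n V t) lam) (Icc a b))
    {P : R2n n × R2n n →ₗ[ℝ] R2n n × R2n n}
    (hP : IsStateTransition (fun t => companionCLM (VI2 n V t) lam) a b P) :
    F2 n a b V lam = range (boundaryTraceMap P) := by
  ext X
  constructor
  · rintro ⟨y, y', y'', hy, rfl⟩
    exact ⟨(y a, y' a), by simp [hP _ hy.isIntegralCurveOn]⟩
  · rintro ⟨x, rfl⟩
    obtain ⟨z, rfl, hz⟩ := exists_isIntegralCurveOn_clm hA hab x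
    exact ⟨_, _, _, hz.isSolR, by simp [hP z hz]⟩

end Schrodinger

theorem F2_lagrangian_general (n : ℕ) (a b : ℝ) (hab : a < b)
    (V : ℝ → Matrix (Fin n) (Fin n) ℝ)
    (hVcont : ∀ i j, ContinuousOn (fun x => V x i j) (Icc a b))
    (hVsymm : ∀ x ∈ Icc a b, (V x)ᵀ = V x)
    (lam : ℝ) :
    ∃ S : Submodule ℝ (R8n n),
      (S : Set (R8n n)) = F2 n a b V lam ∧
      Module.finrank ℝ S = 4 * n ∧
      ∀ Y₁ ∈ F2 n a b V lam, ∀ Y₂ ∈ F2 n a b V lam, omegaForm n Y₁ Y₂ = 0 := by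
  have hA : ContinuousOn (fun t => companionCLM (VI2 n V t) lam) (Icc a b) :=
    (continuousOn_VI2 hVcont).companionCLM lam
  obtain ⟨P, hP⟩ := exists_isStateTransition hA hab.le
  have hF2 := F2_eq_range_boundaryTraceMap hab.le hA hP
  refine ⟨LinearMap.range (boundaryTraceMap P), by rw [LinearMap.coe_range, hF2], ?_, ?_⟩
  · rw [LinearMap.finrank_range_of_inj (boundaryTraceMap_injective P), Module.finrank_prod,
      Module.finrank_fintype_fun_eq_card, Fintype.card_prod, Fintype.card_fin, Fintype.card_fin]
    ring
  · rw [hF2]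
    rintro _ ⟨x, rfl⟩ _ ⟨y, rfl⟩
    rw [omegaForm_boundaryTraceMap, hP.bilinear_apply_eq_of_skew hA hab.le _
      (fun t ht => symplecticBilin_companionCLM_add (VI2_transpose (hVsymm t ht)) lam), sub_self]

/-- for every `λ ∈ ℝ`, `F²_λ` is a Lagrangian subspace of `(ℝ^{8n}, ω)`:
it is a linear subspace of real dimension `4n` on which `ω` vanishes identically. -/
theorem F2_lagrangian (n : ℕ) (hn : 1 ≤ n) (a b : ℝ) (hab : a < b)
    (V : ℝ → Matrix (Fin n) (Fin n) ℝ)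
    (hVcont : ∀ i j, ContinuousOn (fun x => V x i j) (Icc a b))
    (hVsymm : ∀ x ∈ Icc a b, (V x)ᵀ = V x)
    (lam : ℝ) :
    ∃ S : Submodule ℝ (R8n n),
      (S : Set (R8n n)) = F2 n a b V lam ∧
      Module.finrank ℝ S = 4 * n ∧
      ∀ Y₁ ∈ F2 n a b V lam, ∀ Y₂ ∈ F2 n a b V lam, omegaForm n Y₁ Y₂ = 0 :=
  F2_lagrangian_general n a b hab V hVcont hVsymm lam
end
end

section
/- Fix r ∈ ℝ. For any finite collection of pairwise distinct θ₁, …, θ_m ∈ (0,π), one has Σ_{j=1}^m dim_ℂ E(r,θ_j) ≤ n. The same bound holds for pairwise distinct θ₁, …, θ_m ∈ (π,2π). -/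
open Set Matrix

noncomputable section

/-- `u` (with derivatives `u'`, `u''` on `[a,b]`) is a `(λ,θ)`-eigenfunction:
`-u'' + Vu = λu` on `[a,b]` with `θ`-periodic boundary conditions. -/
def IsEig (n : ℕ) (a b : ℝ) (V : ℝ → Matrix (Fin n) (Fin n) ℝ) (lam θ : ℝ)
    (u u' u'' : ℝ → Fin n → ℂ) : Prop :=
  (∀ x ∈ Icc a b, HasDerivWithinAt u (u' x) (Icc a b) x) ∧
  (∀ x ∈ Icc a b, HasDerivWithinAt u' (u'' x) (Icc a b) x) ∧
  (∀ x ∈ Icc a b, -u'' x + ((V x).map Complex.ofReal).mulVec (u x) = (lam : ℂ) • u x) ∧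
  u b = Complex.exp (θ * Complex.I) • u a ∧
  u' b = Complex.exp (θ * Complex.I) • u' a

/-- The eigenspace `E(λ,θ)`, realized as the set of restrictions to `[a,b]` of
`(λ,θ)`-eigenfunctions. -/
def Eset (n : ℕ) (a b : ℝ) (V : ℝ → Matrix (Fin n) (Fin n) ℝ) (lam θ : ℝ) :
    Set (Icc a b → Fin n → ℂ) :=
  {f | ∃ u u' u'', IsEig n a b V lam θ u u' u'' ∧ ∀ x : Icc a b, f x = u x}

/-!
Write `-u'' + V u = r u` as the first-order linear system `z' = A(x) z` for `z = (u, u')`.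
By Grönwall's inequality a solution on `[a, b]` is determined by `z a`, so the pairs
`(z a, z b)` form the graph of a partial linear map `T` on `ℂⁿ × ℂⁿ` (the monodromy), and
`E(r, θ)` is isomorphic to `{w | T w = e^{iθ} w}`. Extending `T` to an endomorphism, these
spaces lie in eigenspaces for distinct eigenvalues, so their dimensions add up to at most `2n`.
As `V` is real, complex conjugation exchanges the `μ`- and `μ̄`-spaces. For angles all in
`(0, π)` or all in `(π, 2π)` the `2m` numbers `e^{± iθ_j}` are distinct, whence
`2 ∑ dim E(r, θ_j) ≤ 2n`.
-/

section LinearODE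

variable {E : Type*} [NormedAddCommGroup E] [NormedSpace ℝ E]
  {R : Type*} [Semiring R] [Module R E] [SMulCommClass ℝ R E] [ContinuousConstSMul R E]

def linearODESolutions (A : ℝ → E →ₗ[R] E) (s : Set ℝ) : Submodule R (ℝ → E) where
  carrier := {z | ∀ t ∈ s, HasDerivWithinAt z (A t (z t)) s t}
  add_mem' hz hw t ht := by simpa using (hz t ht).add (hw t ht)
  zero_mem' t _ := by rw [Pi.zero_apply, map_zero]; exact hasDerivWithinAt_const t s 0
  smul_mem' c z hz t ht := by simpa using (hz t ht).const_smul c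

theorem eqOn_zero_of_mem_linearODESolutions {A : ℝ → E →ₗ[R] E} {a b K : ℝ}
    (hA : ∀ t ∈ Icc a b, ∀ w, ‖A t w‖ ≤ K * ‖w‖) {z : ℝ → E}
    (hz : z ∈ linearODESolutions A (Icc a b)) (ha : z a = 0) : EqOn z 0 (Icc a b) :=
  eq_zero_of_abs_deriv_le_mul_abs_self_of_eq_zero_right
    (fun t ht => (hz t ht).continuousWithinAt)
    (fun t ht => (hz t (Ico_subset_Icc_self ht)).mono_of_mem_nhdsWithin
      (Filter.mem_of_superset (Icc_mem_nhdsGE ht.2) (Icc_subset_Icc_left ht.1)))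
    ha (fun t ht => hA t (Ico_subset_Icc_self ht) _)

end LinearODE

section LinearRelation

variable {K V : Type*} [Field K] [AddCommGroup V] [Module K V]

theorem iSupIndep.sum_finrank_le [FiniteDimensional K V] {ι : Type*} [Fintype ι]
    {p : ι → Submodule K V} (hp : iSupIndep p) :
    ∑ i, Module.finrank K (p i) ≤ Module.finrank K V := by
  classical
  rw [← Module.finrank_directSum]
  exact LinearMap.finrank_le_finrank_of_injective hp.dfinsupp_lsum_injective

theorem finrank_map_eq_of_ker_domRestrict_eq {W₁ W₂ : Type*} [AddCommGroup W₁] [Module K W₁]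
    [AddCommGroup W₂] [Module K W₂] {p : Submodule K V} {f : V →ₗ[K] W₁} {g : V →ₗ[K] W₂}
    (h : LinearMap.ker (f.domRestrict p) = LinearMap.ker (g.domRestrict p)) :
    Module.finrank K (p.map f) = Module.finrank K (p.map g) := by
  rw [← LinearMap.range_domRestrict, ← LinearMap.range_domRestrict]
  exact ((f.domRestrict p).quotKerEquivRange.symm.trans
    ((Submodule.quotEquivOfEq _ _ h).trans (g.domRestrict p).quotKerEquivRange)).finrank_eq

def relationEigenspace (G : Submodule K (V × V)) (μ : K) : Submodule K V :=
  G.comap (LinearMap.id.prod (μ • LinearMap.id))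

theorem mem_relationEigenspace {G : Submodule K (V × V)} {μ : K} {v : V} :
    v ∈ relationEigenspace G μ ↔ (v, μ • v) ∈ G := Iff.rfl

theorem exists_relationEigenspace_le_eigenspace {G : Submodule K (V × V)}
    (hG : ∀ p ∈ G, p.1 = 0 → p.2 = 0) :
    ∃ g : Module.End K V, ∀ μ, relationEigenspace G μ ≤ g.eigenspace μ := by
  -- `hG` makes `G` the graph of a partial linear map; extend that map to all of `V`.
  obtain ⟨g, hg⟩ := LinearMap.exists_extend G.toLinearPMap.toFun
  refine ⟨g, fun μ v hv => Module.End.mem_eigenspace_iff.2 ?_⟩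
  rw [mem_relationEigenspace, ← G.toLinearPMap_graph_eq hG, LinearPMap.mem_graph_iff] at hv
  obtain ⟨y, rfl, hy⟩ := hv
  simpa [hy] using LinearMap.congr_fun hg y

theorem sum_finrank_relationEigenspace_le [FiniteDimensional K V] {G : Submodule K (V × V)}
    (hG : ∀ p ∈ G, p.1 = 0 → p.2 = 0) {ι : Type*} [Fintype ι] {μ : ι → K}
    (hμ : Function.Injective μ) :
    ∑ i, Module.finrank K (relationEigenspace G (μ i)) ≤ Module.finrank K V := by
  obtain ⟨g, hg⟩ := exists_relationEigenspace_le_eigenspace hG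
  calc ∑ i, Module.finrank K (relationEigenspace G (μ i))
      ≤ ∑ i, Module.finrank K (g.eigenspace (μ i)) :=
        Finset.sum_le_sum fun i _ => Submodule.finrank_mono (hg (μ i))
    _ ≤ Module.finrank K V := (g.eigenspaces_iSupIndep.comp hμ).sum_finrank_le

end LinearRelation

section ComplexConj

variable {V : Type*} [AddCommGroup V] [Module ℂ V] [StarAddMonoid V] [StarModule ℂ V]

theorem finrank_map_starLinearEquiv (p : Submodule ℂ V) :
    Module.finrank ℂ (p.map (starLinearEquiv ℂ (A := V)).toLinearMap) = Module.finrank ℂ p :=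
  (congrArg Cardinal.toNat (rank_eq_of_equiv_equiv (starRingEnd ℂ)
    ((starLinearEquiv ℂ).submoduleMap p).toAddEquiv
    star_involutive.bijective (map_smulₛₗ ((starLinearEquiv ℂ).submoduleMap p)))).symm

theorem finrank_relationEigenspace_le_star [FiniteDimensional ℂ V] {G : Submodule ℂ (V × V)}
    (hG : ∀ p ∈ G, star p ∈ G) (μ : ℂ) :
    Module.finrank ℂ (relationEigenspace G μ) ≤
      Module.finrank ℂ (relationEigenspace G (star μ)) := by
  rw [← finrank_map_starLinearEquiv]
  refine Submodule.finrank_mono ?_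
  rintro _ ⟨v, hv, rfl⟩
  show (star v, star μ • star v) ∈ G
  rw [← star_smul]
  exact hG _ hv

theorem finrank_relationEigenspace_star [FiniteDimensional ℂ V] {G : Submodule ℂ (V × V)}
    (hG : ∀ p ∈ G, star p ∈ G) (μ : ℂ) :
    Module.finrank ℂ (relationEigenspace G (star μ)) =
      Module.finrank ℂ (relationEigenspace G μ) :=
  le_antisymm
    (by have h := finrank_relationEigenspace_le_star hG (star μ); rwa [star_star] at h)
    (finrank_relationEigenspace_le_star hG μ)

end ComplexConj

theorem injOn_exp_ofReal_mul_I :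
    InjOn (fun θ : ℝ => Complex.exp (θ * Complex.I)) (Ico 0 (2 * Real.pi)) := fun _ hx _ hy h =>
  Circle.exp_injOn_Ico (sub_zero _).le hx hy (Subtype.ext (by simpa [Circle.coe_exp] using h))

section Schrodinger

variable {n : ℕ}

/-- The equation `-u'' + V u = r u` as a first-order system in `(u, u')`. -/
def schrodingerField (V : ℝ → Matrix (Fin n) (Fin n) ℝ) (r x : ℝ) :
    ((Fin n → ℂ) × (Fin n → ℂ)) →ₗ[ℂ] (Fin n → ℂ) × (Fin n → ℂ) :=
  (LinearMap.snd ℂ _ _).prod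
    ((((V x).map Complex.ofReal).mulVecLin - (r : ℂ) • LinearMap.id) ∘ₗ LinearMap.fst ℂ _ _)

theorem schrodingerField_apply (V : ℝ → Matrix (Fin n) (Fin n) ℝ) (r x : ℝ)
    (w : (Fin n → ℂ) × (Fin n → ℂ)) :
    schrodingerField V r x w = (w.2, (V x).map Complex.ofReal *ᵥ w.1 - (r : ℂ) • w.1) := rfl

theorem schrodingerField_star (V : ℝ → Matrix (Fin n) (Fin n) ℝ) (r x : ℝ)
    (w : (Fin n → ℂ) × (Fin n → ℂ)) :
    schrodingerField V r x (star w) = star (schrodingerField V r x w) := by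
  ext i <;> simp [schrodingerField_apply, mulVec, dotProduct]

theorem exists_norm_schrodingerField_le {a b : ℝ} {V : ℝ → Matrix (Fin n) (Fin n) ℝ}
    (hV : ContinuousOn V (Icc a b)) (r : ℝ) :
    ∃ K, ∀ x ∈ Icc a b, ∀ w, ‖schrodingerField V r x w‖ ≤ K * ‖w‖ := by
  let _ := @Matrix.linftyOpNormedAddCommGroup (Fin n) (Fin n) ℂ _ _ _
  obtain ⟨C, hC⟩ := isCompact_Icc.exists_bound_of_continuousOn
    ((continuous_id.matrix_map Complex.continuous_ofReal).comp_continuousOn hV)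
  refine ⟨1 + |C| + |r|, fun x hx w => ?_⟩
  have hmul : ‖(V x).map Complex.ofReal *ᵥ w.1‖ ≤ |C| * ‖w.1‖ :=
    (linfty_opNorm_mulVec _ _).trans
      (mul_le_mul_of_nonneg_right ((hC x hx).trans (le_abs_self C)) (norm_nonneg _))
  have h1 : ‖w.1‖ ≤ ‖w‖ := norm_fst_le w
  have h2 : ‖w.2‖ ≤ ‖w‖ := norm_snd_le w
  rw [schrodingerField_apply, Prod.norm_def, max_le_iff]
  constructor
  · nlinarith [norm_nonneg w, abs_nonneg C, abs_nonneg r]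
  · calc ‖(V x).map Complex.ofReal *ᵥ w.1 - (r : ℂ) • w.1‖
        ≤ |C| * ‖w.1‖ + |r| * ‖w.1‖ := by
          refine (norm_sub_le _ _).trans (add_le_add hmul ?_)
          rw [norm_smul, Complex.norm_real, Real.norm_eq_abs]
      _ ≤ (1 + |C| + |r|) * ‖w‖ := by nlinarith [norm_nonneg w.1, abs_nonneg C, abs_nonneg r]

def schrodingerSolutions (n : ℕ) (a b : ℝ) (V : ℝ → Matrix (Fin n) (Fin n) ℝ) (r : ℝ) :
    Submodule ℂ (ℝ → (Fin n → ℂ) × (Fin n → ℂ)) :=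
  linearODESolutions (schrodingerField V r) (Icc a b)

def monodromyRelation (n : ℕ) (a b : ℝ) (V : ℝ → Matrix (Fin n) (Fin n) ℝ) (r : ℝ) :
    Submodule ℂ (((Fin n → ℂ) × (Fin n → ℂ)) × ((Fin n → ℂ) × (Fin n → ℂ))) :=
  (schrodingerSolutions n a b V r).map ((LinearMap.proj a).prod (LinearMap.proj b))

def floquetSolutions (n : ℕ) (a b : ℝ) (V : ℝ → Matrix (Fin n) (Fin n) ℝ) (r : ℝ) (μ : ℂ) :
    Submodule ℂ (ℝ → (Fin n → ℂ) × (Fin n → ℂ)) :=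
  schrodingerSolutions n a b V r ⊓ LinearMap.ker (LinearMap.proj b - μ • LinearMap.proj a)

def restrictFst (n : ℕ) (a b : ℝ) :
    (ℝ → (Fin n → ℂ) × (Fin n → ℂ)) →ₗ[ℂ] (Icc a b → Fin n → ℂ) :=
  LinearMap.pi fun x : Icc a b => LinearMap.fst ℂ _ _ ∘ₗ LinearMap.proj (x : ℝ)

variable {a b : ℝ} {V : ℝ → Matrix (Fin n) (Fin n) ℝ} {r : ℝ}

theorem mem_floquetSolutions {μ : ℂ} {z : ℝ → (Fin n → ℂ) × (Fin n → ℂ)} :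
    z ∈ floquetSolutions n a b V r μ ↔ z ∈ schrodingerSolutions n a b V r ∧ z b = μ • z a := by
  simp [floquetSolutions, sub_eq_zero]

theorem eqOn_zero_of_mem_schrodingerSolutions (hV : ContinuousOn V (Icc a b))
    {z : ℝ → (Fin n → ℂ) × (Fin n → ℂ)} (hz : z ∈ schrodingerSolutions n a b V r)
    (ha : z a = 0) : EqOn z 0 (Icc a b) := by
  obtain ⟨K, hK⟩ := exists_norm_schrodingerField_le hV r
  exact eqOn_zero_of_mem_linearODESolutions hK hz ha

theorem monodromyRelation_snd_eq_zero (hV : ContinuousOn V (Icc a b)) (hab : a ≤ b) :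
    ∀ p ∈ monodromyRelation n a b V r, p.1 = 0 → p.2 = 0 := by
  rintro _ ⟨z, hz, rfl⟩ ha
  exact eqOn_zero_of_mem_schrodingerSolutions hV hz ha (right_mem_Icc.2 hab)

theorem star_mem_monodromyRelation :
    ∀ p ∈ monodromyRelation n a b V r, star p ∈ monodromyRelation n a b V r := by
  rintro _ ⟨z, hz, rfl⟩
  refine ⟨star z, fun x hx => ?_, rfl⟩
  rw [Pi.star_apply, schrodingerField_star]
  exact (hz x hx).star

theorem relationEigenspace_monodromyRelation (μ : ℂ) :
    relationEigenspace (monodromyRelation n a b V r) μ =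
      (floquetSolutions n a b V r μ).map (LinearMap.proj a) := by
  ext w
  simp only [mem_relationEigenspace, monodromyRelation, Submodule.mem_map, mem_floquetSolutions,
    LinearMap.coe_prod, Function.prod, LinearMap.proj_apply, Prod.mk.injEq]
  constructor
  · rintro ⟨z, hz, rfl, hb⟩
    exact ⟨z, ⟨hz, hb⟩, rfl⟩
  · rintro ⟨z, ⟨hz, hb⟩, rfl⟩
    exact ⟨z, hz, rfl, hb⟩

theorem Eset_eq_map_floquetSolutions (θ : ℝ) :
    Eset n a b V r θ =
      (floquetSolutions n a b V r (Complex.exp (θ * Complex.I))).map (restrictFst n a b) := by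
  ext f
  constructor
  · rintro ⟨u, u', u'', ⟨hu, hu', heq, hb, hb'⟩, hf⟩
    refine ⟨fun x => (u x, u' x), mem_floquetSolutions.2 ⟨fun x hx => ?_, Prod.ext hb hb'⟩,
      funext fun x => (hf x).symm⟩
    have hu'' : u'' x = (V x).map Complex.ofReal *ᵥ u x - (r : ℂ) • u x := by
      rw [← heq x hx]; abel
    rw [schrodingerField_apply, ← hu'']
    exact (hu x hx).prodMk (hu' x hx)
  · rintro ⟨z, hz, rfl⟩
    obtain ⟨hz, hzb⟩ := mem_floquetSolutions.1 hz
    refine ⟨fun x => (z x).1, fun x => (z x).2, fun x => (schrodingerField V r x (z x)).2,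
      ⟨fun x hx => ?_, fun x hx => ?_, fun x hx => ?_, congrArg Prod.fst hzb,
        congrArg Prod.snd hzb⟩, fun x => rfl⟩
    · exact (ContinuousLinearMap.fst ℝ _ _).hasFDerivAt.comp_hasDerivWithinAt x (hz x hx)
    · exact (ContinuousLinearMap.snd ℝ _ _).hasFDerivAt.comp_hasDerivWithinAt x (hz x hx)
    · simp only [schrodingerField_apply]; abel

theorem restrictFst_eq_zero_iff (hV : ContinuousOn V (Icc a b)) (hab : a < b)
    {z : ℝ → (Fin n → ℂ) × (Fin n → ℂ)} (hz : z ∈ schrodingerSolutions n a b V r) :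
    restrictFst n a b z = 0 ↔ z a = 0 := by
  have ha : a ∈ Icc a b := left_mem_Icc.2 hab.le
  constructor
  · intro h
    have hfst : ∀ x ∈ Icc a b, (z x).1 = 0 := fun x hx => congrFun h ⟨x, hx⟩
    have hderiv : HasDerivWithinAt (fun x => (z x).1) (z a).2 (Icc a b) a :=
      (ContinuousLinearMap.fst ℝ (Fin n → ℂ) (Fin n → ℂ)).hasFDerivAt.comp_hasDerivWithinAt a
        (hz a ha)
    have hzero : HasDerivWithinAt (fun x => (z x).1) 0 (Icc a b) a :=
      (hasDerivWithinAt_const a _ 0).congr hfst (hfst a ha)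
    exact Prod.ext (hfst a ha) ((uniqueDiffOn_Icc hab a ha).eq_deriv _ hderiv hzero)
  · intro h
    funext x
    simp [restrictFst, eqOn_zero_of_mem_schrodingerSolutions hV hz h x.2]

theorem finrank_Eset (hV : ContinuousOn V (Icc a b)) (hab : a < b) (θ : ℝ) :
    Set.finrank ℂ (Eset n a b V r θ) = Module.finrank ℂ
      (relationEigenspace (monodromyRelation n a b V r) (Complex.exp (θ * Complex.I))) := by
  rw [Set.finrank, Eset_eq_map_floquetSolutions, Submodule.span_eq,
    relationEigenspace_monodromyRelation]
  refine finrank_map_eq_of_ker_domRestrict_eq ?_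
  ext ⟨z, hz⟩
  simpa using restrictFst_eq_zero_iff hV hab (mem_floquetSolutions.1 hz).1

theorem sum_finrank_relationEigenspace_le_of_im_pos (hV : ContinuousOn V (Icc a b))
    (hab : a ≤ b) {ι : Type*} [Fintype ι] {μ : ι → ℂ} (hμ : Function.Injective μ)
    (him : ∀ i, 0 < (μ i).im) :
    ∑ i, Module.finrank ℂ (relationEigenspace (monodromyRelation n a b V r) (μ i)) ≤ n := by
  have hμμ : Function.Injective (Sum.elim μ (star ∘ μ)) :=
    hμ.sumElim (star_injective.comp hμ) fun i j h => by
      have him_eq := congrArg Complex.im h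
      simp only [Function.comp_apply, Complex.star_def, Complex.conj_im] at him_eq
      linarith [him i, him j]
  have hsum := sum_finrank_relationEigenspace_le
    (monodromyRelation_snd_eq_zero (r := r) hV hab) hμμ
  rw [Fintype.sum_sum_type, Module.finrank_prod, Module.finrank_fin_fun] at hsum
  change ∑ i, Module.finrank ℂ (relationEigenspace _ (μ i)) +
    ∑ i, Module.finrank ℂ (relationEigenspace _ (star (μ i))) ≤ n + n at hsum
  rw [Finset.sum_congr rfl fun i _ =>
    finrank_relationEigenspace_star star_mem_monodromyRelation (μ i)] at hsum
  omega

end Schrodinger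

theorem eigenspaces_dim_sum_le_n_general (n : ℕ) (a b : ℝ) (hab : a < b)
    (V : ℝ → Matrix (Fin n) (Fin n) ℝ)
    (hVcont : ∀ i j, ContinuousOn (fun x => V x i j) (Icc a b))
    (r : ℝ) (m : ℕ) (θs : Fin m → ℝ)
    (hmem : (∀ j, θs j ∈ Ioo (0 : ℝ) Real.pi) ∨
            (∀ j, θs j ∈ Ioo Real.pi (2 * Real.pi)))
    (hinj : Function.Injective θs) :
    ∑ j, Set.finrank ℂ (Eset n a b V r (θs j)) ≤ n := by
  have hV : ContinuousOn V (Icc a b) := continuousOn_pi.2 fun i => continuousOn_pi.2 (hVcont i)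
  have hθ : ∀ j, θs j ∈ Ico 0 (2 * Real.pi) := by
    rcases hmem with h | h <;> intro j <;> constructor <;> linarith [(h j).1, (h j).2, Real.pi_pos]
  have hμ : Function.Injective fun j => Complex.exp (θs j * Complex.I) :=
    fun j k h => hinj (injOn_exp_ofReal_mul_I (hθ j) (hθ k) h)
  rw [Finset.sum_congr rfl fun j _ => finrank_Eset hV hab (θs j)]
  rcases hmem with h | h
  · refine sum_finrank_relationEigenspace_le_of_im_pos hV hab.le hμ fun j => ?_
    rw [Complex.exp_ofReal_mul_I_im]
    exact Real.sin_pos_of_pos_of_lt_pi (h j).1 (h j).2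
  · rw [Finset.sum_congr rfl fun j _ =>
      (finrank_relationEigenspace_star star_mem_monodromyRelation _).symm]
    refine sum_finrank_relationEigenspace_le_of_im_pos hV hab.le (star_injective.comp hμ)
      fun j => ?_
    rw [Complex.star_def, Complex.conj_im, Complex.exp_ofReal_mul_I_im, ← Real.sin_sub_pi]
    exact Real.sin_pos_of_pos_of_lt_pi (by linarith [(h j).1]) (by linarith [(h j).2])

/-- for a fixed `r` and pairwise distinct `θ₁, …, θ_m` all lying in `(0,π)`,
or all lying in `(π,2π)`, one has `Σ_j dim_ℂ E(r,θ_j) ≤ n`. -/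
theorem eigenspaces_dim_sum_le_n (n : ℕ) (hn : 1 ≤ n) (a b : ℝ) (hab : a < b)
    (V : ℝ → Matrix (Fin n) (Fin n) ℝ)
    (hVcont : ∀ i j, ContinuousOn (fun x => V x i j) (Icc a b))
    (hVsymm : ∀ x ∈ Icc a b, (V x)ᵀ = V x)
    (r : ℝ) (m : ℕ) (θs : Fin m → ℝ)
    (hmem : (∀ j, θs j ∈ Ioo (0 : ℝ) Real.pi) ∨
            (∀ j, θs j ∈ Ioo Real.pi (2 * Real.pi)))
    (hinj : Function.Injective θs) :
    ∑ j, Set.finrank ℂ (Eset n a b V r (θs j)) ≤ n :=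
  eigenspaces_dim_sum_le_n_general n a b hab V hVcont r m θs hmem hinj
end
end

section
/- Fix r ∈ ℝ. Let ϑ₁, …, ϑ_n ∈ (0,π) (not necessarily distinct) and let u₁, …, u_n be ℂ-linearly independent functions such that u_k ∈ E(r,ϑ_k) for each 1 ≤ k ≤ n. If θ ∈ (0,π) and u ∈ E(r,θ), then u lies in the ℂ-linear span of u₁, …, u_n. -/
/-!
For solutions of `-u'' + V u = r u` with `V` real symmetric, the *bilinear* Wronskian
`u' ⬝ᵥ v - u ⬝ᵥ v'` is constant on `[a, b]`. If `u ∈ E(r, θ₁)` and `v ∈ E(r, θ₂)`, the boundary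
conditions multiply it by `exp (i (θ₁ + θ₂)) ≠ 1` between `a` and `b`, so it vanishes. Hence the
initial data `(u(a), u'(a))` of `u₁, …, uₙ, u` are pairwise orthogonal for the nondegenerate
symplectic form on `ℂⁿ × ℂⁿ`; an isotropic subspace has dimension at most `n`, so these `n + 1`
data are dependent, and by uniqueness for the ODE so are the functions themselves.
-/

open Set Matrix

noncomputable section

/-- Restriction of a function on `ℝ` to the interval `[a,b]`. -/
def restrictIcc (n : ℕ) (a b : ℝ) (u : ℝ → Fin n → ℂ) : Icc a b → Fin n → ℂ :=
  fun x => u x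

namespace LinearMap.BilinForm

variable {K V : Type*} [Field K] [AddCommGroup V] [Module K V] [FiniteDimensional K V]
  {B : LinearMap.BilinForm K V}

open Module in
theorem two_mul_finrank_le_of_le_orthogonal (hB : B.Nondegenerate) {W : Submodule K V}
    (hW : W ≤ B.orthogonal W) : 2 * finrank K W ≤ finrank K V := by
  have h := Submodule.finrank_mono hW
  rw [finrank_orthogonal hB] at h
  have := Submodule.finrank_le W
  omega

theorem not_linearIndependent_of_forall_apply_eq_zero {ι : Type*} [Fintype ι]
    (hB : B.Nondegenerate) {d : ι → V} (hd : ∀ i j, B (d i) (d j) = 0)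
    (hcard : Module.finrank K V < 2 * Fintype.card ι) : ¬ LinearIndependent K d := by
  intro hli
  have hW : Submodule.span K (Set.range d) ≤ B.orthogonal (Submodule.span K (Set.range d)) := by
    rw [Submodule.span_le]
    rintro _ ⟨j, rfl⟩ x hx
    have hker : Submodule.span K (Set.range d) ≤ LinearMap.ker (B.flip (d j)) :=
      Submodule.span_le.2 (by rintro _ ⟨i, rfl⟩; exact hd i j)
    exact hker hx
  have := two_mul_finrank_le_of_le_orthogonal hB hW
  rw [finrank_span_eq_card hli] at this
  omega

end LinearMap.BilinForm

section SymplecticForm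

variable (R ι : Type*) [CommRing R] [Fintype ι]

def symplecticForm : LinearMap.BilinForm R ((ι → R) × (ι → R)) :=
  LinearMap.mk₂ R (fun p q => p.2 ⬝ᵥ q.1 - p.1 ⬝ᵥ q.2)
    (fun p p' q => by simp only [Prod.fst_add, Prod.snd_add, add_dotProduct]; ring)
    (fun c p q => by simp only [Prod.smul_fst, Prod.smul_snd, smul_dotProduct, smul_eq_mul]; ring)
    (fun p q q' => by simp only [Prod.fst_add, Prod.snd_add, dotProduct_add]; ring)
    (fun c p q => by simp only [Prod.smul_fst, Prod.smul_snd, dotProduct_smul, smul_eq_mul]; ring)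

variable {R ι}

@[simp]
theorem symplecticForm_apply (p q : (ι → R) × (ι → R)) :
    symplecticForm R ι p q = p.2 ⬝ᵥ q.1 - p.1 ⬝ᵥ q.2 := rfl

theorem symplecticForm_separatingLeft : (symplecticForm R ι).SeparatingLeft := by
  classical
  intro p hp
  ext i
  · simpa [dotProduct_single] using hp (0, Pi.single i 1)
  · simpa [dotProduct_single] using hp (Pi.single i 1, 0)

theorem symplecticForm_nondegenerate (K : Type*) [Field K] :
    (symplecticForm K ι).Nondegenerate :=
  .ofSeparatingLeft symplecticForm_separatingLeft

end SymplecticForm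

theorem HasDerivWithinAt.dotProduct {ι 𝔸 : Type*} [Fintype ι] [NormedCommRing 𝔸]
    [NormedAlgebra ℝ 𝔸] {f g : ℝ → ι → 𝔸} {f' g' : ι → 𝔸} {s : Set ℝ} {x : ℝ}
    (hf : HasDerivWithinAt f f' s x) (hg : HasDerivWithinAt g g' s x) :
    HasDerivWithinAt (fun y => f y ⬝ᵥ g y) (f' ⬝ᵥ g x + f x ⬝ᵥ g') s x := by
  unfold _root_.dotProduct
  rw [← Finset.sum_add_distrib]
  exact HasDerivWithinAt.fun_sum fun i _ =>
    (hasDerivWithinAt_pi.1 hf i).fun_mul (hasDerivWithinAt_pi.1 hg i)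

section LinearODE

variable {E : Type*} [NormedAddCommGroup E] [NormedSpace ℝ E] {a b : ℝ}

theorem ODE_linear_eqOn_zero {L : ℝ → E →L[ℝ] E}
    (hL : ContinuousOn L (Icc a b)) {f : ℝ → E}
    (hf : ∀ t ∈ Icc a b, HasDerivWithinAt f (L t (f t)) (Icc a b) t) (ha : f a = 0) :
    EqOn f 0 (Icc a b) := by
  obtain ⟨C, hC⟩ := isCompact_Icc.exists_bound_of_continuousOn hL
  have hlip : ∀ t ∈ Ico a b, LipschitzOnWith C.toNNReal (L t) univ := by
    intro t ht
    refine ((L t).lipschitz.weaken ?_).lipschitzOnWith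
    rw [← NNReal.coe_le_coe, Real.coe_toNNReal', coe_nnnorm]
    exact (hC t (Ico_subset_Icc_self ht)).trans (le_max_left C 0)
  have hderiv : ∀ g : ℝ → E, (∀ t ∈ Icc a b, HasDerivWithinAt g (L t (g t)) (Icc a b) t) →
      ∀ t ∈ Ico a b, HasDerivWithinAt g (L t (g t)) (Ici t) t := fun g hg t ht =>
    (hg t (Ico_subset_Icc_self ht)).mono_of_mem_nhdsWithin (Icc_mem_nhdsGE_of_mem ht)
  refine ODE_solution_unique_of_mem_Icc_right hlip
    (fun t ht => (hf t ht).continuousWithinAt) (hderiv f hf) (fun _ _ => trivial)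
    continuousOn_const (hderiv 0 fun t _ => ?_) (fun _ _ => trivial) ha
  rw [Pi.zero_apply, map_zero]
  exact hasDerivWithinAt_const t (Icc a b) 0

theorem ODE_linear_second_order_eqOn_zero {A : ℝ → E →L[ℝ] E}
    (hA : ContinuousOn A (Icc a b)) {p p' : ℝ → E}
    (hp : ∀ t ∈ Icc a b, HasDerivWithinAt p (p' t) (Icc a b) t)
    (hp' : ∀ t ∈ Icc a b, HasDerivWithinAt p' (A t (p t)) (Icc a b) t)
    (ha : p a = 0) (ha' : p' a = 0) : EqOn p 0 (Icc a b) := by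
  let L : ℝ → E × E →L[ℝ] E × E := fun t =>
    (ContinuousLinearMap.snd ℝ E E).prod ((A t).comp (ContinuousLinearMap.fst ℝ E E))
  have hL : ContinuousOn L (Icc a b) :=
    (ContinuousLinearMap.prodₗᵢ ℝ).continuous.comp_continuousOn
      (continuousOn_const.prodMk (hA.clm_comp continuousOn_const))
  have h := ODE_linear_eqOn_zero hL (f := fun t => (p t, p' t))
    (fun t ht => (hp t ht).prodMk (hp' t ht)) (by simp [ha, ha'])
  exact fun t ht => congrArg Prod.fst (h ht)

end LinearODE

theorem Matrix.IsSymm.mulVec_dotProduct {ι R : Type*} [Fintype ι] [CommSemiring R]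
    {A : Matrix ι ι R} (hA : A.IsSymm) (y z : ι → R) : A *ᵥ y ⬝ᵥ z = y ⬝ᵥ A *ᵥ z := by
  rw [← vecMul_transpose, ← dotProduct_mulVec, hA]

theorem Complex.exp_ofReal_mul_I_ne_one {θ : ℝ} (h0 : 0 < θ) (h2π : θ < 2 * Real.pi) :
    exp (θ * I) ≠ 1 := by
  intro h
  have hcos : Real.cos θ = 1 := by simpa using congrArg re h
  exact h0.ne' ((Real.cos_eq_one_iff_of_lt_of_lt (by linarith [Real.pi_pos]) h2π).1 hcos)

def IsSol (n : ℕ) (a b : ℝ) (V : ℝ → Matrix (Fin n) (Fin n) ℝ) (lam : ℝ)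
    (u u' u'' : ℝ → Fin n → ℂ) : Prop :=
  (∀ x ∈ Icc a b, HasDerivWithinAt u (u' x) (Icc a b) x) ∧
  (∀ x ∈ Icc a b, HasDerivWithinAt u' (u'' x) (Icc a b) x) ∧
  (∀ x ∈ Icc a b, -u'' x + ((V x).map Complex.ofReal).mulVec (u x) = (lam : ℂ) • u x)

theorem IsEig.isSol {n : ℕ} {a b : ℝ} {V : ℝ → Matrix (Fin n) (Fin n) ℝ} {lam θ : ℝ}
    {u u' u'' : ℝ → Fin n → ℂ} (h : IsEig n a b V lam θ u u' u'') :
    IsSol n a b V lam u u' u'' :=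
  ⟨h.1, h.2.1, h.2.2.1⟩

namespace IsSol

variable {n : ℕ} {a b : ℝ} {V : ℝ → Matrix (Fin n) (Fin n) ℝ} {lam : ℝ}
  {u u' u'' : ℝ → Fin n → ℂ}

theorem second_deriv_eq (h : IsSol n a b V lam u u' u'') {x : ℝ} (hx : x ∈ Icc a b) :
    u'' x = (V x).map Complex.ofReal *ᵥ u x - (lam : ℂ) • u x := by
  rw [← h.2.2 x hx]
  abel

theorem sum {ι : Type*} [Fintype ι] (c : ι → ℂ) {u u' u'' : ι → ℝ → Fin n → ℂ}
    (h : ∀ k, IsSol n a b V lam (u k) (u' k) (u'' k)) :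
    IsSol n a b V lam (fun x => ∑ k, c k • u k x) (fun x => ∑ k, c k • u' k x)
      (fun x => ∑ k, c k • u'' k x) := by
  refine ⟨fun x hx => ?_, fun x hx => ?_, fun x hx => ?_⟩
  · exact HasDerivWithinAt.fun_sum fun k _ => ((h k).1 x hx).const_smul (c k)
  · exact HasDerivWithinAt.fun_sum fun k _ => ((h k).2.1 x hx).const_smul (c k)
  · simp only [fun k => (h k).second_deriv_eq hx, Matrix.mulVec_sum, Matrix.mulVec_smul,
      Finset.smul_sum, smul_sub, Finset.sum_sub_distrib, smul_comm (lam : ℂ)]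
    abel

theorem eqOn_zero (hV : ∀ i j, ContinuousOn (fun x => V x i j) (Icc a b))
    (h : IsSol n a b V lam u u' u'') (ha : u a = 0) (ha' : u' a = 0) : EqOn u 0 (Icc a b) := by
  let M : ℝ → Matrix (Fin n) (Fin n) ℂ := fun t => (V t).map Complex.ofReal - (lam : ℂ) • 1
  let A : ℝ → (Fin n → ℂ) →L[ℝ] (Fin n → ℂ) := fun t =>
    ((Matrix.toLin' (M t)).restrictScalars ℝ).toContinuousLinearMap
  have hM : ContinuousOn M (Icc a b) :=
    (continuousOn_pi.2 fun i => continuousOn_pi.2 fun j =>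
      Complex.continuous_ofReal.comp_continuousOn (hV i j)).sub continuousOn_const
  have hA : ContinuousOn A (Icc a b) := continuousOn_clm_apply.2 fun y =>
    (continuous_id.matrix_mulVec continuous_const).comp_continuousOn hM
  refine ODE_linear_second_order_eqOn_zero hA h.1 (fun t ht => ?_) ha ha'
  have hAt : A t (u t) = u'' t := by
    simp [A, M, h.second_deriv_eq ht, Matrix.smul_mulVec]
  exact hAt ▸ h.2.1 t ht

theorem symplecticForm_eq (hab : a ≤ b) (hV : ∀ x ∈ Icc a b, (V x).IsSymm)
    {v v' v'' : ℝ → Fin n → ℂ} (hu : IsSol n a b V lam u u' u'')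
    (hv : IsSol n a b V lam v v' v'') :
    symplecticForm ℂ (Fin n) (u b, u' b) (v b, v' b) =
      symplecticForm ℂ (Fin n) (u a, u' a) (v a, v' a) := by
  let W : ℝ → ℂ := fun x => symplecticForm ℂ (Fin n) (u x, u' x) (v x, v' x)
  have hW : ∀ x ∈ Icc a b, HasDerivWithinAt W 0 (Icc a b) x := by
    intro x hx
    have hW' := ((hu.2.1 x hx).dotProduct (hv.1 x hx)).sub ((hu.1 x hx).dotProduct (hv.2.1 x hx))
    have h0 : u'' x ⬝ᵥ v x + u' x ⬝ᵥ v' x - (u' x ⬝ᵥ v' x + u x ⬝ᵥ v'' x) = 0 := by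
      rw [hu.second_deriv_eq hx, hv.second_deriv_eq hx, sub_dotProduct, dotProduct_sub,
        smul_dotProduct, dotProduct_smul, ((hV x hx).map _).mulVec_dotProduct]
      ring
    rw [h0] at hW'
    exact hW'
  exact constant_of_has_deriv_right_zero (fun x hx => (hW x hx).continuousWithinAt)
    (fun x hx => (hW x (Ico_subset_Icc_self hx)).mono_of_mem_nhdsWithin
      (Icc_mem_nhdsGE_of_mem hx)) b (right_mem_Icc.2 hab)


theorem linearIndependent_initialData (hV : ∀ i j, ContinuousOn (fun x => V x i j) (Icc a b))
    {ι : Type*} [Fintype ι] {u u' u'' : ι → ℝ → Fin n → ℂ}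
    (hu : ∀ k, IsSol n a b V lam (u k) (u' k) (u'' k))
    (hli : LinearIndependent ℂ fun k => restrictIcc n a b (u k)) :
    LinearIndependent ℂ fun k => (u k a, u' k a) := by
  rw [Fintype.linearIndependent_iff] at hli ⊢
  intro c hc
  have hzero := (sum c hu).eqOn_zero hV
    (by simpa [Prod.fst_sum] using congrArg Prod.fst hc)
    (by simpa [Prod.snd_sum] using congrArg Prod.snd hc)
  refine hli c (funext fun x => ?_)
  simpa [restrictIcc] using hzero x.2

end IsSol

theorem IsEig.symplecticForm_eq_zero {n : ℕ} {a b : ℝ} {V : ℝ → Matrix (Fin n) (Fin n) ℝ}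
    {lam θ₁ θ₂ : ℝ} {u u' u'' v v' v'' : ℝ → Fin n → ℂ} (hab : a ≤ b)
    (hV : ∀ x ∈ Icc a b, (V x).IsSymm) (hu : IsEig n a b V lam θ₁ u u' u'')
    (hv : IsEig n a b V lam θ₂ v v' v'') (hθ : Complex.exp ((θ₁ + θ₂ : ℝ) * Complex.I) ≠ 1) :
    symplecticForm ℂ (Fin n) (u a, u' a) (v a, v' a) = 0 := by
  have h := hu.isSol.symplecticForm_eq hab hV hv.isSol
  rw [hu.2.2.2.1, hu.2.2.2.2, hv.2.2.2.1, hv.2.2.2.2, ← Prod.smul_mk, ← Prod.smul_mk] at h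
  simp only [map_smul, LinearMap.smul_apply, smul_eq_mul] at h
  rw [← mul_assoc, ← Complex.exp_add, ← add_mul, ← Complex.ofReal_add] at h
  by_contra hne
  rw [add_comm] at hθ
  exact hθ ((mul_eq_right₀ hne).1 h)

theorem eigenfunction_mem_span_general (n : ℕ) (a b : ℝ) (hab : a < b)
    (V : ℝ → Matrix (Fin n) (Fin n) ℝ)
    (hVcont : ∀ i j, ContinuousOn (fun x => V x i j) (Icc a b))
    (hVsymm : ∀ x ∈ Icc a b, (V x)ᵀ = V x)
    (r : ℝ) (ϑ : Fin n → ℝ) (hϑ : ∀ k, ϑ k ∈ Ioo (0 : ℝ) Real.pi)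
    (u : Fin n → ℝ → Fin n → ℂ)
    (heig : ∀ k, ∃ u' u'', IsEig n a b V r (ϑ k) (u k) u' u'')
    (hli : LinearIndependent ℂ (fun k => restrictIcc n a b (u k)))
    (θ : ℝ) (hθ : θ ∈ Ioo (0 : ℝ) Real.pi)
    (w : ℝ → Fin n → ℂ) (hw : ∃ w' w'', IsEig n a b V r θ w w' w'') :
    restrictIcc n a b w ∈
      Submodule.span ℂ (Set.range (fun k => restrictIcc n a b (u k))) := by
  choose u' u'' hu using heig
  obtain ⟨w', w'', hw⟩ := hw
  let θs : Fin (n + 1) → ℝ := Fin.snoc ϑ θ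
  let us : Fin (n + 1) → ℝ → Fin n → ℂ := Fin.snoc u w
  let us' : Fin (n + 1) → ℝ → Fin n → ℂ := Fin.snoc u' w'
  let us'' : Fin (n + 1) → ℝ → Fin n → ℂ := Fin.snoc u'' w''
  have hθs : ∀ k, θs k ∈ Ioo (0 : ℝ) Real.pi :=
    Fin.lastCases (by simpa [θs] using hθ) fun k => by simpa [θs] using hϑ k
  have heig : ∀ k, IsEig n a b V r (θs k) (us k) (us' k) (us'' k) :=
    Fin.lastCases (by simpa [θs, us, us', us''] using hw) fun k => by
      simpa [θs, us, us', us''] using hu k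
  have hiso : ∀ j k, symplecticForm ℂ (Fin n) (us j a, us' j a) (us k a, us' k a) = 0 :=
    fun j k => (heig j).symplecticForm_eq_zero hab.le hVsymm (heig k) <|
      Complex.exp_ofReal_mul_I_ne_one (by linarith [(hθs j).1, (hθs k).1])
        (by linarith [(hθs j).2, (hθs k).2])
  have hdep : ¬ LinearIndependent ℂ (restrictIcc n a b ∘ us) := fun h =>
    LinearMap.BilinForm.not_linearIndependent_of_forall_apply_eq_zero
      (symplecticForm_nondegenerate ℂ) hiso
      (by simp only [Module.finrank_prod, Module.finrank_fin_fun, Fintype.card_fin]; omega)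
      (IsSol.linearIndependent_initialData hVcont (fun k => (heig k).isSol) h)
  rw [Fin.comp_snoc, linearIndependent_finSnoc, not_and, not_not] at hdep
  exact hdep hli

/-- if `ϑ₁, …, ϑ_n ∈ (0,π)` and `u₁, …, u_n` are ℂ-linearly independent
functions on `[a,b]` with `u_k ∈ E(r,ϑ_k)`, then every eigenfunction `u ∈ E(r,θ)` with
`θ ∈ (0,π)` lies in the ℂ-linear span of `u₁, …, u_n`. -/
theorem eigenfunction_mem_span (n : ℕ) (hn : 1 ≤ n) (a b : ℝ) (hab : a < b)
    (V : ℝ → Matrix (Fin n) (Fin n) ℝ)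
    (hVcont : ∀ i j, ContinuousOn (fun x => V x i j) (Icc a b))
    (hVsymm : ∀ x ∈ Icc a b, (V x)ᵀ = V x)
    (r : ℝ) (ϑ : Fin n → ℝ) (hϑ : ∀ k, ϑ k ∈ Ioo (0 : ℝ) Real.pi)
    (u : Fin n → ℝ → Fin n → ℂ)
    (heig : ∀ k, ∃ u' u'', IsEig n a b V r (ϑ k) (u k) u' u'')
    (hli : LinearIndependent ℂ (fun k => restrictIcc n a b (u k)))
    (θ : ℝ) (hθ : θ ∈ Ioo (0 : ℝ) Real.pi)
    (w : ℝ → Fin n → ℂ) (hw : ∃ w' w'', IsEig n a b V r θ w w' w'') :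
    restrictIcc n a b w ∈
      Submodule.span ℂ (Set.range (fun k => restrictIcc n a b (u k))) :=
  eigenfunction_mem_span_general n a b hab V hVcont hVsymm r ϑ hϑ u heig hli θ hθ w hw
end
end

section
/- Let (λ, u) be a C¹ eigenvalue branch on (θ₁,θ₂). Then for every θ ∈ (θ₁,θ₂), λ'(θ) · ∫_a^b ‖u(θ,x)‖²_{ℂ^n} dx = 2·Im⟨∂ₓu(θ,a), u(θ,a)⟩. In particular, if ∫_a^b ‖u(θ,x)‖² dx = 1 then λ'(θ) = 2·Im⟨∂ₓu(θ,a), u(θ,a)⟩. -/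
/-! Fix `θ` and let `φ` vary near it. Because `V` is real symmetric, the Wronskian
`⟨∂ₓu(θ,·), u(φ,·)⟩ - ⟨u(θ,·), ∂ₓu(φ,·)⟩` has derivative `(λ(φ) - λ(θ)) ⟨u(θ,·), u(φ,·)⟩`, and the
periodic boundary conditions multiply it by `e^{i(θ-φ)}` between `a` and `b`. Integrating,
`(λ(φ) - λ(θ)) ∫ ⟨u(θ,·), u(φ,·)⟩ = (e^{i(θ-φ)} - 1) W(φ)` with `W(φ)` the Wronskian at `a`.
Dividing by `φ - θ` and letting `φ → θ` gives `λ'(θ) ∫ ‖u(θ,·)‖² = -i (z - z̄) = 2 Im z` for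
`z = ⟨∂ₓu(θ,a), u(θ,a)⟩`. The integral is continuous in `φ` because `u` is jointly continuous,
which follows from the continuity of `∂_θ u`. -/

open Set Matrix

noncomputable section

/-- The inner product `⟨v,w⟩ = Σ_j v_j conj(w_j)` on `ℂ^n`. -/
def cinner (n : ℕ) (v w : Fin n → ℂ) : ℂ := ∑ j, v j * (starRingEnd ℂ) (w j)

/-- `(lam, u)` (with the indicated partial derivatives) is a C¹ eigenvalue branch on
`(θ₁,θ₂)`: `lam` is differentiable with derivative `lam'`, for each `θ` the function
`u(θ,·)` is a `(lam(θ),θ)`-eigenfunction with `∂ₓu = ux`, `∂ₓ∂ₓu = uxx`, the maps `u`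
and `ux` are differentiable in `θ` with derivatives `uθ`, `uθx`, and `uθ`, `uθx` are
jointly continuous on `(θ₁,θ₂) × [a,b]`. -/
def IsBranch (n : ℕ) (a b : ℝ) (V : ℝ → Matrix (Fin n) (Fin n) ℝ) (θ₁ θ₂ : ℝ)
    (lam lam' : ℝ → ℝ) (u ux uxx uθ uθx : ℝ → ℝ → Fin n → ℂ) : Prop :=
  (∀ θ ∈ Ioo θ₁ θ₂, HasDerivWithinAt lam (lam' θ) (Ioo θ₁ θ₂) θ) ∧
  (∀ θ ∈ Ioo θ₁ θ₂, IsEig n a b V (lam θ) θ (u θ) (ux θ) (uxx θ)) ∧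
  (∀ θ ∈ Ioo θ₁ θ₂, ∀ x ∈ Icc a b,
      HasDerivWithinAt (fun t => u t x) (uθ θ x) (Ioo θ₁ θ₂) θ) ∧
  (∀ θ ∈ Ioo θ₁ θ₂, ∀ x ∈ Icc a b,
      HasDerivWithinAt (fun t => ux t x) (uθx θ x) (Ioo θ₁ θ₂) θ) ∧
  ContinuousOn (fun p : ℝ × ℝ => uθ p.1 p.2) (Ioo θ₁ θ₂ ×ˢ Icc a b) ∧
  ContinuousOn (fun p : ℝ × ℝ => uθx p.1 p.2) (Ioo θ₁ θ₂ ×ˢ Icc a b)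

open Filter Topology Function Interval

theorem HasDerivAt.mul_eq_mul_of_eventually_sub_mul_eq {𝕜 A : Type*} [NontriviallyNormedField 𝕜]
    [NormedRing A] [NormedAlgebra 𝕜 A] {L F g w : 𝕜 → A} {L' F' : A} {x : 𝕜}
    (hL : HasDerivAt L L' x) (hF : HasDerivAt F F' x) (hg : ContinuousAt g x)
    (hw : ContinuousAt w x) (h : ∀ᶠ y in 𝓝 x, (L y - L x) * g y = (F y - F x) * w y) :
    L' * g x = F' * w x := by
  refine tendsto_nhds_unique
    ((hasDerivAt_iff_tendsto_slope.1 hL).mul (hg.tendsto.mono_left nhdsWithin_le_nhds)) ?_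
  refine ((hasDerivAt_iff_tendsto_slope.1 hF).mul
    (hw.tendsto.mono_left nhdsWithin_le_nhds)).congr' ?_
  filter_upwards [nhdsWithin_le_nhds h] with y hy
  simp only [slope_def_module, smul_mul_assoc, hy]

theorem exists_eventually_norm_sub_le_of_hasDerivWithinAt {X E : Type*} [TopologicalSpace X]
    [NormedAddCommGroup E] [NormedSpace ℝ E] {f f' : ℝ → X → E} {s : Set ℝ} {k : Set X}
    {t₀ : ℝ} (hs : s ∈ 𝓝 t₀) (hk : IsCompact k)
    (hf : ∀ t ∈ s, ∀ x ∈ k, HasDerivWithinAt (f · x) (f' t x) s t)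
    (hf' : ContinuousOn (uncurry f') (s ×ˢ k)) :
    ∃ C, ∀ᶠ t in 𝓝 t₀, ∀ x ∈ k, ‖f t x - f t₀ x‖ ≤ C * |t - t₀| := by
  obtain ⟨δ, hδ, hball⟩ := Metric.nhds_basis_closedBall.mem_iff.1 hs
  obtain ⟨C, hC⟩ := ((isCompact_closedBall t₀ δ).prod hk).exists_bound_of_continuousOn
    (hf'.mono (prod_mono hball subset_rfl))
  refine ⟨C, ?_⟩
  filter_upwards [Metric.closedBall_mem_nhds t₀ hδ] with t ht x hx
  simpa [Real.norm_eq_abs] using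
    (convex_closedBall t₀ δ).norm_image_sub_le_of_norm_hasDerivWithin_le (f := (f · x))
      (fun τ hτ => (hf τ (hball hτ) x hx).mono hball) (fun τ hτ => hC (τ, x) ⟨hτ, hx⟩)
      (Metric.mem_closedBall_self hδ.le) ht

theorem continuousOn_uncurry_of_hasDerivWithinAt {X E : Type*} [TopologicalSpace X]
    [NormedAddCommGroup E] [NormedSpace ℝ E] {f f' : ℝ → X → E} {s : Set ℝ} {k : Set X}
    (hs : IsOpen s) (hk : IsCompact k)
    (hf : ∀ t ∈ s, ∀ x ∈ k, HasDerivWithinAt (f · x) (f' t x) s t)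
    (hf' : ContinuousOn (uncurry f') (s ×ˢ k)) (hfk : ∀ t ∈ s, ContinuousOn (f t) k) :
    ContinuousOn (uncurry f) (s ×ˢ k) := by
  rintro ⟨t₀, x₀⟩ ⟨ht₀, hx₀⟩
  obtain ⟨C, hC⟩ := exists_eventually_norm_sub_le_of_hasDerivWithinAt (hs.mem_nhds ht₀) hk hf hf'
  have hvert : Tendsto (fun p : ℝ × X => f p.1 p.2 - f t₀ p.2) (𝓝[s ×ˢ k] (t₀, x₀)) (𝓝 0) := by
    refine squeeze_zero_norm' (a := fun p => C * |p.1 - t₀|) ?_ ?_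
    · filter_upwards [nhdsWithin_le_nhds ((continuous_fst.tendsto (t₀, x₀)).eventually hC),
        self_mem_nhdsWithin] with p hp hpk using hp p.2 hpk.2
    · refine tendsto_nhdsWithin_of_tendsto_nhds ?_
      have : Continuous fun p : ℝ × X => C * |p.1 - t₀| := by fun_prop
      simpa using this.tendsto (t₀, x₀)
  have hhor : Tendsto (fun p : ℝ × X => f t₀ p.2) (𝓝[s ×ˢ k] (t₀, x₀)) (𝓝 (f t₀ x₀)) :=
    ((hfk t₀ ht₀ x₀ hx₀).comp continuousWithinAt_snd fun p hp => hp.2).tendsto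
  simpa [ContinuousWithinAt, uncurry_def] using hvert.add hhor

theorem continuousOn_intervalIntegral_of_continuousOn_uncurry {X E : Type*} [TopologicalSpace X]
    [FirstCountableTopology X] [NormedAddCommGroup E] [NormedSpace ℝ E] {f : X → ℝ → E}
    {s : Set X} {a b : ℝ} (hf : ContinuousOn (uncurry f) (s ×ˢ [[a, b]])) :
    ContinuousOn (fun p => ∫ x in a..b, f p x) s := by
  intro q hq
  have hunif : TendstoUniformlyOn f (f q) (𝓝[s] q) [[a, b]] := by
    refine Metric.tendstoUniformlyOn_iff.2 fun ε hε => ?_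
    obtain ⟨v, hv, hvε⟩ :=
      isCompact_uIcc.mem_uniformity_of_prod hf hq (Metric.dist_mem_uniformity hε)
    filter_upwards [hv] with p hp x hx
    exact dist_comm (f p x) (f q x) ▸ hvε p hp x hx
  refine hunif.tendsto_intervalIntegral_of_continuousOn ?_
  filter_upwards [self_mem_nhdsWithin] with p hp
  exact hf.comp (Continuous.prodMk_right p).continuousOn fun x hx => ⟨hp, hx⟩

section cinner

variable {n : ℕ}

theorem cinner_sub_left (v w t : Fin n → ℂ) :
    cinner n (v - w) t = cinner n v t - cinner n w t := by
  simp [cinner, sub_mul, Finset.sum_sub_distrib]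

theorem cinner_sub_right (v w t : Fin n → ℂ) :
    cinner n v (w - t) = cinner n v w - cinner n v t := by
  simp [cinner, mul_sub, Finset.sum_sub_distrib]

theorem cinner_smul_left (c : ℂ) (v w : Fin n → ℂ) :
    cinner n (c • v) w = c * cinner n v w := by
  simp [cinner, Finset.mul_sum, mul_assoc]

theorem cinner_smul_right (c : ℂ) (v w : Fin n → ℂ) :
    cinner n v (c • w) = (starRingEnd ℂ) c * cinner n v w := by
  simp only [cinner, Pi.smul_apply, smul_eq_mul, map_mul, Finset.mul_sum]
  exact Finset.sum_congr rfl fun j _ => by ring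

theorem cinner_swap (v w : Fin n → ℂ) : cinner n w v = (starRingEnd ℂ) (cinner n v w) := by
  simp only [cinner, map_sum, map_mul, Complex.conj_conj]
  exact Finset.sum_congr rfl fun j _ => mul_comm _ _

theorem cinner_self (v : Fin n → ℂ) :
    cinner n v v = ((∑ j, Complex.normSq (v j) : ℝ) : ℂ) := by
  simp [cinner, Complex.mul_conj]

theorem cinner_mulVec_left_of_transpose_eq {M : Matrix (Fin n) (Fin n) ℝ} (hM : Mᵀ = M)
    (v w : Fin n → ℂ) :
    cinner n ((M.map Complex.ofReal).mulVec v) w =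
      cinner n v ((M.map Complex.ofReal).mulVec w) := by
  simp only [cinner, mulVec, dotProduct, map_apply, map_sum, map_mul, Complex.conj_ofReal,
    Finset.sum_mul, Finset.mul_sum]
  rw [Finset.sum_comm]
  refine Finset.sum_congr rfl fun j _ => Finset.sum_congr rfl fun k _ => ?_
  rw [← transpose_apply M j k, hM]
  ring

theorem continuous_cinner : Continuous fun p : (Fin n → ℂ) × (Fin n → ℂ) => cinner n p.1 p.2 := by
  unfold cinner; fun_prop

theorem HasDerivWithinAt.cinner {f g : ℝ → Fin n → ℂ} {f' g' : Fin n → ℂ} {s : Set ℝ} {x : ℝ}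
    (hf : HasDerivWithinAt f f' s x) (hg : HasDerivWithinAt g g' s x) :
    HasDerivWithinAt (fun y => cinner n (f y) (g y))
      (cinner n f' (g x) + cinner n (f x) g') s x := by
  simp only [_root_.cinner, ← Finset.sum_add_distrib]
  refine HasDerivWithinAt.fun_sum fun j _ => ?_
  simpa only [starRingEnd_apply] using
    (hasDerivWithinAt_pi.1 hf j).fun_mul (hasDerivWithinAt_pi.1 hg j).star

end cinner

namespace IsEig

variable {n : ℕ} {a b : ℝ} {V : ℝ → Matrix (Fin n) (Fin n) ℝ} {μ ν θ φ : ℝ}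
  {u u' u'' v v' v'' : ℝ → Fin n → ℂ}

theorem continuousOn (hu : IsEig n a b V μ θ u u' u'') : ContinuousOn u (Icc a b) :=
  fun x hx => (hu.1 x hx).continuousWithinAt

theorem hasDerivWithinAt_wronskian (hV : ∀ x ∈ Icc a b, (V x)ᵀ = V x)
    (hu : IsEig n a b V μ θ u u' u'') (hv : IsEig n a b V ν φ v v' v'') {x : ℝ}
    (hx : x ∈ Icc a b) :
    HasDerivWithinAt (fun y => cinner n (u' y) (v y) - cinner n (u y) (v' y))
      (((ν : ℂ) - μ) * cinner n (u x) (v x)) (Icc a b) x := by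
  refine (((hu.2.1 x hx).cinner (hv.1 x hx)).sub ((hu.1 x hx).cinner (hv.2.1 x hx))).congr_deriv ?_
  have hu'' : u'' x = ((V x).map Complex.ofReal).mulVec (u x) - (μ : ℂ) • u x := by
    rw [← hu.2.2.1 x hx]; abel
  have hv'' : v'' x = ((V x).map Complex.ofReal).mulVec (v x) - (ν : ℂ) • v x := by
    rw [← hv.2.2.1 x hx]; abel
  rw [hu'', hv'', cinner_sub_left, cinner_sub_right, cinner_smul_left, cinner_smul_right,
    cinner_mulVec_left_of_transpose_eq (hV x hx), Complex.conj_ofReal]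
  ring

theorem wronskian_right_eq_exp_mul (hu : IsEig n a b V μ θ u u' u'')
    (hv : IsEig n a b V ν φ v v' v'') :
    cinner n (u' b) (v b) - cinner n (u b) (v' b) =
      Complex.exp ((θ - φ) * Complex.I) * (cinner n (u' a) (v a) - cinner n (u a) (v' a)) := by
  have hconj : (starRingEnd ℂ) (Complex.exp (φ * Complex.I)) = Complex.exp (-(φ * Complex.I)) := by
    rw [← Complex.exp_conj]; simp
  have hexp : Complex.exp ((θ - φ) * Complex.I) =
      Complex.exp (θ * Complex.I) * Complex.exp (-(φ * Complex.I)) := by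
    rw [← Complex.exp_add]; ring_nf
  rw [hu.2.2.2.1, hu.2.2.2.2, hv.2.2.2.1, hv.2.2.2.2]
  simp only [cinner_smul_left, cinner_smul_right, hconj, hexp]
  ring

theorem sub_mul_integral_cinner (hV : ∀ x ∈ Icc a b, (V x)ᵀ = V x) (hab : a ≤ b)
    (hu : IsEig n a b V μ θ u u' u'') (hv : IsEig n a b V ν φ v v' v'') :
    ((ν : ℂ) - μ) * ∫ x in a..b, cinner n (u x) (v x) =
      (Complex.exp ((θ - φ) * Complex.I) - 1) *
        (cinner n (u' a) (v a) - cinner n (u a) (v' a)) := by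
  have hW {x} (hx : x ∈ Icc a b) := hu.hasDerivWithinAt_wronskian hV hv hx
  have hint : IntervalIntegrable (fun x => cinner n (u x) (v x)) MeasureTheory.volume a b :=
    ContinuousOn.intervalIntegrable_of_Icc hab
      (continuous_cinner.comp_continuousOn (hu.continuousOn.prodMk hv.continuousOn))
  rw [← intervalIntegral.integral_const_mul,
    intervalIntegral.integral_eq_sub_of_hasDerivAt_of_le hab
      (fun x hx => (hW hx).continuousWithinAt)
      (fun x hx => (hW (Ioo_subset_Icc_self hx)).hasDerivAt (Icc_mem_nhds hx.1 hx.2))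
      (hint.const_mul _), hu.wronskian_right_eq_exp_mul hv]
  ring

end IsEig

theorem IsBranch.continuousOn_integral_cinner {n : ℕ} {a b : ℝ}
    {V : ℝ → Matrix (Fin n) (Fin n) ℝ} {θ₁ θ₂ θ : ℝ} {lam lam' : ℝ → ℝ}
    {u ux uxx uθ uθx : ℝ → ℝ → Fin n → ℂ}
    (hbranch : IsBranch n a b V θ₁ θ₂ lam lam' u ux uxx uθ uθx) (hab : a ≤ b)
    (hθ : θ ∈ Ioo θ₁ θ₂) :
    ContinuousOn (fun φ => ∫ x in a..b, cinner n (u θ x) (u φ x)) (Ioo θ₁ θ₂) := by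
  obtain ⟨-, heig, huθ, -, hcθ, -⟩ := hbranch
  have hu : ContinuousOn (uncurry u) (Ioo θ₁ θ₂ ×ˢ Icc a b) :=
    continuousOn_uncurry_of_hasDerivWithinAt isOpen_Ioo isCompact_Icc huθ hcθ
      fun t ht => (heig t ht).continuousOn
  refine continuousOn_intervalIntegral_of_continuousOn_uncurry ?_
  rw [uIcc_of_le hab]
  exact continuous_cinner.comp_continuousOn
    (((heig θ hθ).continuousOn.comp continuousOn_snd fun p hp => hp.2).prodMk hu)

theorem neg_I_mul_sub_conj (z : ℂ) :
    -Complex.I * (z - (starRingEnd ℂ) z) = ((2 * z.im : ℝ) : ℂ) := by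
  rw [Complex.sub_conj]
  linear_combination (-((2 * z.im : ℝ) : ℂ)) * Complex.I_mul_I

theorem eigenvalue_derivative_formula_general (n : ℕ) (a b : ℝ) (hab : a < b)
    (V : ℝ → Matrix (Fin n) (Fin n) ℝ)
    (hVsymm : ∀ x ∈ Icc a b, (V x)ᵀ = V x)
    (θ₁ θ₂ : ℝ)
    (lam lam' : ℝ → ℝ) (u ux uxx uθ uθx : ℝ → ℝ → Fin n → ℂ)
    (hbranch : IsBranch n a b V θ₁ θ₂ lam lam' u ux uxx uθ uθx) :
    ∀ θ ∈ Ioo θ₁ θ₂,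
      lam' θ * (∫ x in a..b, ∑ j, Complex.normSq (u θ x j)) =
        2 * (cinner n (ux θ a) (u θ a)).im ∧
      ((∫ x in a..b, ∑ j, Complex.normSq (u θ x j)) = 1 →
        lam' θ = 2 * (cinner n (ux θ a) (u θ a)).im) := by
  intro θ hθ
  have hθnhds : Ioo θ₁ θ₂ ∈ 𝓝 θ := isOpen_Ioo.mem_nhds hθ
  have ha : a ∈ Icc a b := left_mem_Icc.2 hab.le
  have hg : ContinuousAt (fun φ => ∫ x in a..b, cinner n (u θ x) (u φ x)) θ :=
    hbranch.continuousOn_integral_cinner hab.le hθ |>.continuousAt hθnhds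
  obtain ⟨hlam, heig, huθ, huθx, -⟩ := hbranch
  have hw : ContinuousAt (fun φ => cinner n (ux θ a) (u φ a) - cinner n (u θ a) (ux φ a)) θ :=
    (continuous_cinner.continuousAt.comp
        (continuousAt_const.prodMk ((huθ θ hθ a ha).hasDerivAt hθnhds).continuousAt)).sub
      (continuous_cinner.continuousAt.comp
        (continuousAt_const.prodMk ((huθx θ hθ a ha).hasDerivAt hθnhds).continuousAt))
  have hexp : HasDerivAt (fun φ : ℝ => Complex.exp ((θ - φ) * Complex.I)) (-Complex.I) θ := by
    simpa using (((hasDerivAt_id θ).ofReal_comp.const_sub (θ : ℂ)).mul_const Complex.I).cexp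
  have hgreen : ∀ᶠ φ in 𝓝 θ, ((lam φ : ℂ) - lam θ) * ∫ x in a..b, cinner n (u θ x) (u φ x) =
      (Complex.exp ((θ - φ) * Complex.I) - Complex.exp ((θ - θ) * Complex.I)) *
        (cinner n (ux θ a) (u φ a) - cinner n (u θ a) (ux φ a)) := by
    filter_upwards [hθnhds] with φ hφ
    rw [sub_self, zero_mul, Complex.exp_zero]
    exact (heig θ hθ).sub_mul_integral_cinner hVsymm hab.le (heig φ hφ)
  have key := HasDerivAt.mul_eq_mul_of_eventually_sub_mul_eq
    ((hlam θ hθ).hasDerivAt hθnhds).ofReal_comp hexp hg hw hgreen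
  simp only [cinner_self, intervalIntegral.integral_ofReal, cinner_swap (ux θ a),
    neg_I_mul_sub_conj] at key
  have hformula : lam' θ * (∫ x in a..b, ∑ j, Complex.normSq (u θ x j)) =
      2 * (cinner n (ux θ a) (u θ a)).im := mod_cast key
  exact ⟨hformula, fun hnorm => by simpa [hnorm] using hformula⟩

/-- along a C¹ eigenvalue branch,
`λ'(θ) ∫_a^b ‖u(θ,x)‖² dx = 2 Im ⟨∂ₓu(θ,a), u(θ,a)⟩`; in particular if
`∫_a^b ‖u(θ,x)‖² dx = 1` then `λ'(θ) = 2 Im ⟨∂ₓu(θ,a), u(θ,a)⟩`. -/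
theorem eigenvalue_derivative_formula (n : ℕ) (hn : 1 ≤ n) (a b : ℝ) (hab : a < b)
    (V : ℝ → Matrix (Fin n) (Fin n) ℝ)
    (hVcont : ∀ i j, ContinuousOn (fun x => V x i j) (Icc a b))
    (hVsymm : ∀ x ∈ Icc a b, (V x)ᵀ = V x)
    (θ₁ θ₂ : ℝ) (hθ₁ : 0 ≤ θ₁) (h12 : θ₁ < θ₂) (hθ₂ : θ₂ < 2 * Real.pi)
    (lam lam' : ℝ → ℝ) (u ux uxx uθ uθx : ℝ → ℝ → Fin n → ℂ)
    (hbranch : IsBranch n a b V θ₁ θ₂ lam lam' u ux uxx uθ uθx) :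
    ∀ θ ∈ Ioo θ₁ θ₂,
      lam' θ * (∫ x in a..b, ∑ j, Complex.normSq (u θ x j)) =
        2 * (cinner n (ux θ a) (u θ a)).im ∧
      ((∫ x in a..b, ∑ j, Complex.normSq (u θ x j)) = 1 →
        lam' θ = 2 * (cinner n (ux θ a) (u θ a)).im) :=
  eigenvalue_derivative_formula_general n a b hab V hVsymm θ₁ θ₂ lam lam' u ux uxx uθ uθx hbranch
end
end

section
/- Let n = 1, so V : [a,b] → ℝ is a continuous scalar potential. Let λ ∈ ℝ, let θ ∈ (0,π) ∪ (π,2π), and let u be a (λ,θ)-eigenfunction that is not identically zero. Then Im(u'(a)·conj(u(a))) ≠ 0. -/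
/-!
If `Im (u'(a) conj u(a)) = 0`, the Wronskian of `u` and `conj u` vanishes at `a`. Since `V` is
real, `conj u` solves the same equation, so `φ = conj u(a) u - u(a) conj u` and
`ψ = conj u'(a) u - u'(a) conj u` are solutions with zero Cauchy data at `a`, hence vanish
identically by Gronwall's inequality. The boundary conditions give
`φ(b) = (e^{iθ} - e^{-iθ}) |u(a)|²` and `ψ'(b) = (e^{iθ} - e^{-iθ}) |u'(a)|²`; as `sin θ ≠ 0`,
`u(a) = u'(a) = 0`, and then `u ≡ 0`.
-/

open Set

noncomputable section

/-- `u` (with derivatives `u'`, `u''` on `[a,b]`) is a scalar `(λ,θ)`-eigenfunction: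
`-u'' + Vu = λu` on `[a,b]` with `θ`-periodic boundary conditions. -/
def IsEig1 (a b : ℝ) (V : ℝ → ℝ) (lam θ : ℝ) (u u' u'' : ℝ → ℂ) : Prop :=
  (∀ x ∈ Icc a b, HasDerivWithinAt u (u' x) (Icc a b) x) ∧
  (∀ x ∈ Icc a b, HasDerivWithinAt u' (u'' x) (Icc a b) x) ∧
  (∀ x ∈ Icc a b, -u'' x + (V x : ℂ) * u x = (lam : ℂ) * u x) ∧
  u b = Complex.exp (θ * Complex.I) * u a ∧
  u' b = Complex.exp (θ * Complex.I) * u' a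

open ComplexConjugate

def SolvesSchrodinger (s : Set ℝ) (W : ℝ → ℝ) (f f' : ℝ → ℂ) : Prop :=
  ∀ x ∈ s, HasDerivWithinAt f (f' x) s x ∧ HasDerivWithinAt f' (W x * f x) s x

namespace SolvesSchrodinger

variable {s : Set ℝ} {W : ℝ → ℝ} {f f' g g' : ℝ → ℂ}

theorem const_mul (h : SolvesSchrodinger s W f f') (c : ℂ) :
    SolvesSchrodinger s W (fun x => c * f x) (fun x => c * f' x) := fun x hx =>
  ⟨(h x hx).1.const_mul c, ((h x hx).2.const_mul c).congr_deriv (mul_left_comm _ _ _)⟩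

theorem sub (hf : SolvesSchrodinger s W f f') (hg : SolvesSchrodinger s W g g') :
    SolvesSchrodinger s W (fun x => f x - g x) (fun x => f' x - g' x) := fun x hx =>
  ⟨(hf x hx).1.sub (hg x hx).1, ((hf x hx).2.sub (hg x hx).2).congr_deriv (mul_sub _ _ _).symm⟩

theorem star (h : SolvesSchrodinger s W f f') :
    SolvesSchrodinger s W (fun x => conj (f x)) (fun x => conj (f' x)) := fun x hx =>
  ⟨(h x hx).1.star, by simpa using (h x hx).2.star⟩

theorem eq_zero_of_initial_eq_zero {a b C : ℝ} (h : SolvesSchrodinger (Icc a b) W f f')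
    (hC : ∀ x ∈ Icc a b, ‖W x‖ ≤ C) (ha : f a = 0) (ha' : f' a = 0) :
    ∀ x ∈ Icc a b, f x = 0 ∧ f' x = 0 := by
  set F : ℝ → ℂ × ℂ := fun x => (f x, f' x)
  have hF : ∀ x ∈ Icc a b, HasDerivWithinAt F (f' x, W x * f x) (Icc a b) x :=
    fun x hx => (h x hx).1.prodMk (h x hx).2
  have hbound : ∀ x ∈ Ico a b, ‖((f' x, W x * f x) : ℂ × ℂ)‖ ≤ max 1 C * ‖F x‖ + 0 := by
    intro x hx
    rw [add_zero, Prod.norm_mk, norm_mul, Complex.norm_real]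
    refine max_le ?_ ?_
    · exact (norm_snd_le (F x)).trans (le_mul_of_one_le_left (norm_nonneg _) (le_max_left 1 C))
    · exact mul_le_mul ((hC x (Ico_subset_Icc_self hx)).trans (le_max_right 1 C))
        (norm_fst_le (F x)) (norm_nonneg _) (zero_le_one.trans (le_max_left 1 C))
  intro x hx
  have hFx := norm_le_gronwallBound_of_norm_deriv_right_le
    (fun y hy => (hF y hy).continuousWithinAt)
    (fun y hy => (hF y (Ico_subset_Icc_self hy)).mono_of_mem_nhdsWithin
      (Icc_mem_nhdsGE_of_mem hy))
    (by simp [F, ha, ha'] : ‖F a‖ ≤ 0) hbound x hx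
  rw [gronwallBound_ε0_δ0, norm_le_zero_iff] at hFx
  exact Prod.ext_iff.mp hFx

end SolvesSchrodinger

theorem IsEig1.solvesSchrodinger {a b : ℝ} {V : ℝ → ℝ} {lam θ : ℝ} {u u' u'' : ℝ → ℂ}
    (hu : IsEig1 a b V lam θ u u' u'') :
    SolvesSchrodinger (Icc a b) (fun x => V x - lam) u u' := fun x hx => by
  obtain ⟨hu', hu'', heq, -, -⟩ := hu
  refine ⟨hu' x hx, ?_⟩
  convert hu'' x hx using 1
  push_cast
  linear_combination heq x hx

theorem Complex.conj_exp_ofReal_mul_I_ne_self {θ : ℝ}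
    (hθ : θ ∈ Ioo 0 Real.pi ∪ Ioo Real.pi (2 * Real.pi)) :
    conj (exp (θ * I)) ≠ exp (θ * I) := by
  rw [Ne, conj_eq_iff_im, exp_ofReal_mul_I_im, ← neg_eq_zero, ← Real.sin_sub_pi,
    Real.sin_eq_zero_iff_of_lt_of_lt, sub_eq_zero]
  · rintro rfl
    simp at hθ
  all_goals rcases hθ with hθ | hθ <;> linarith [hθ.1, hθ.2, Real.pi_pos]

theorem Complex.eq_zero_of_conj_mul_mul_eq {z w : ℂ} (hw : conj w ≠ w)
    (h : conj z * (w * z) = z * conj (w * z)) : z = 0 := by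
  have h' : (w - conj w) * (z * conj z) = 0 := by
    rw [map_mul] at h
    linear_combination h
  rw [mul_conj, mul_eq_zero, sub_eq_zero, ofReal_eq_zero, normSq_eq_zero] at h'
  exact h'.resolve_left (Ne.symm hw)

/-- for a continuous scalar potential (`n = 1`), if `θ ∈ (0,π) ∪ (π,2π)`
and `u` is a `(λ,θ)`-eigenfunction that is not identically zero, then
`Im (u'(a) conj(u(a))) ≠ 0`. -/
theorem im_wronskian_ne_zero (a b : ℝ) (hab : a < b)
    (V : ℝ → ℝ) (hVcont : ContinuousOn V (Icc a b))
    (lam θ : ℝ) (hθ : θ ∈ Ioo (0 : ℝ) Real.pi ∪ Ioo Real.pi (2 * Real.pi))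
    (u u' u'' : ℝ → ℂ) (hu : IsEig1 a b V lam θ u u' u'')
    (hne : ∃ x ∈ Icc a b, u x ≠ 0) :
    (u' a * (starRingEnd ℂ) (u a)).im ≠ 0 := by
  intro him
  obtain ⟨C, hC⟩ : ∃ C, ∀ x ∈ Icc a b, ‖V x - lam‖ ≤ C :=
    isCompact_Icc.exists_bound_of_continuousOn (hVcont.sub continuousOn_const)
  have hsol := hu.solvesSchrodinger
  have hwr : u' a * conj (u a) = conj (u' a) * u a := by
    simpa using (Complex.conj_eq_iff_im.mpr him).symm
  have hb : b ∈ Icc a b := right_mem_Icc.mpr hab.le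
  have hφ := ((hsol.const_mul (conj (u a))).sub (hsol.star.const_mul (u a))
    ).eq_zero_of_initial_eq_zero hC (by ring) (by linear_combination hwr) b hb
  have hψ := ((hsol.const_mul (conj (u' a))).sub (hsol.star.const_mul (u' a))
    ).eq_zero_of_initial_eq_zero hC (by linear_combination -hwr) (by ring) b hb
  obtain ⟨-, -, -, hub, hu'b⟩ := hu
  have hE := Complex.conj_exp_ofReal_mul_I_ne_self hθ
  have hua : u a = 0 := Complex.eq_zero_of_conj_mul_mul_eq hE <| by
    rw [← hub]; exact sub_eq_zero.mp hφ.1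
  have hu'a : u' a = 0 := Complex.eq_zero_of_conj_mul_mul_eq hE <| by
    rw [← hu'b]; exact sub_eq_zero.mp hψ.2
  obtain ⟨x, hx, hux⟩ := hne
  exact hux (hsol.eq_zero_of_initial_eq_zero hC hua hu'a x hx).1
end
end
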